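/- arXiv:1905.02883 — 5 statements merged into one kernel-verified Lean document; each statement's English description precedes it below -/
import Mathlib

section
/- Let (Ω,μ) = ∏_{i=1}^n (Ω_i,μ_i) be a finite product probability space in which each factor Ω_i is partially ordered and each μ_i is positively associated. Let A_1,…,A_k ⊆ Ω be events that are all increasing, and define X(ω) = max{|I| : I ⊆ [k] and A_i, i ∈ I, occur disjointly at ω}. Let Y_1,…,Y_k be independent Bernoulli random variables with E Y_i = μ(A_i) and Y = Y_1 + ⋯ + Y_k. Then X is stochastically dominated by Y; that is, for every r ∈ ℝ, μ({ω : X(ω) ≥ r}) ≤ Pr(Y ≥ r). -/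
open MeasureTheory ProbabilityTheory

/-- The events `A j`, `j ∈ I`, occur disjointly at `ω`: there are pairwise disjoint
sets `S j ⊆ [n]` such that every `ω'` agreeing with `ω` on `S j` lies in `A j`. -/
def OccurDisjointly {n : ℕ} {Ω : Fin n → Type*} {ι : Type*}
    (A : ι → Set (∀ i, Ω i)) (I : Finset ι) (ω : ∀ i, Ω i) : Prop :=
  ∃ S : ι → Finset (Fin n),
    (∀ j ∈ I, ∀ j' ∈ I, j ≠ j' → Disjoint (S j) (S j')) ∧
    ∀ j ∈ I, ∀ ω' : ∀ i, Ω i, (∀ i ∈ S j, ω' i = ω i) → ω' ∈ A j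

/-- `X ω` is the maximum size of a set `I ⊆ [k]` such that the events
`A j`, `j ∈ I`, occur disjointly at `ω`. -/
noncomputable def maxDisjOcc {n k : ℕ} {Ω : Fin n → Type*}
    (A : Fin k → Set (∀ i, Ω i)) (ω : ∀ i, Ω i) : ℕ :=
  sSup {m : ℕ | ∃ I : Finset (Fin k), I.card = m ∧ OccurDisjointly A I ω}

/-- A probability measure on a partially ordered space is positively associated if
`m A * m B ≤ m (A ∩ B)` for all increasing (upper) sets `A, B`. -/
def PositivelyAssociated {Γ : Type*} [Preorder Γ] [MeasurableSpace Γ]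
    (m : Measure Γ) : Prop :=
  ∀ A B : Set Γ, IsUpperSet A → IsUpperSet B → m A * m B ≤ m (A ∩ B)

/-!
Add the events one at a time. If `m + 1` of the events indexed by `insert j J` occur disjointly
but `m + 1` of those indexed by `J` do not, then `A j` occurs disjointly from
`G = {X_J ≥ m}` outside `H = {X_J ≥ m + 1}`. The conditional BK inequality
`μ ((A □ G) \ H) ≤ μ A * μ (G \ H)` for increasing `A, G, H` then gives
`μ {X_{J+j} ≥ m + 1} ≤ (1 - p) μ H + p μ G` with `p = μ (A j)`, which is the recursion obeyed
by the Bernoulli sums, so induction on `J` concludes.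

The conditional BK inequality is proved by interpolation on the doubled space `∏ (Ωᵢ × Ωᵢ)`:
coordinates are handed over one at a time from the first copy to the second, and positive
association of the factor being handed over shows that the probability of the interpolating
event does not decrease.
-/

open Function Set
open scoped ENNReal

namespace MeasureTheory

theorem measurePreserving_arrowProdEquivProdArrow_of_finite {ι : Type*} [Fintype ι]
    {α β : ι → Type*} [∀ i, Finite (α i)] [∀ i, Finite (β i)]
    [∀ i, MeasurableSpace (α i)] [∀ i, MeasurableSpace (β i)]
    [∀ i, MeasurableSingletonClass (α i)] [∀ i, MeasurableSingletonClass (β i)]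
    (μ : ∀ i, Measure (α i)) (ν : ∀ i, Measure (β i)) [∀ i, SigmaFinite (μ i)]
    [∀ i, SigmaFinite (ν i)] :
    MeasurePreserving (Equiv.arrowProdEquivProdArrow ι α β)
      (Measure.pi fun i ↦ (μ i).prod (ν i)) ((Measure.pi μ).prod (Measure.pi ν)) := by
  refine ⟨measurable_of_countable _, Measure.ext_of_singleton fun ⟨a, b⟩ ↦ ?_⟩
  rw [Measure.map_apply (measurable_of_countable _) (measurableSet_singleton _),
    ← Equiv.image_symm_eq_preimage, image_singleton, Measure.pi_singleton,
    ← singleton_prod_singleton, Measure.prod_prod, Measure.pi_singleton, Measure.pi_singleton,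
    ← Finset.prod_mul_distrib]
  simp [← singleton_prod_singleton, Measure.prod_prod]

theorem Measure.pi_le_pi_of_update_le {ι : Type*} [Fintype ι] [DecidableEq ι]
    {X : ι → Type*} [∀ i, MeasurableSpace (X i)] (μ : ∀ i, Measure (X i))
    [∀ i, SigmaFinite (μ i)] {E F : Set (∀ i, X i)} (hE : MeasurableSet E)
    (hF : MeasurableSet F) (k : ι)
    (h : ∀ x, μ k {y | update x k y ∈ E} ≤ μ k {y | update x k y ∈ F}) :
    Measure.pi μ E ≤ Measure.pi μ F := by
  rcases E.eq_empty_or_nonempty with rfl | ⟨x, -⟩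
  · simp
  have hsection (G : Set (∀ i, X i)) (hG : MeasurableSet G) : Measure.pi μ G =
      (∫⋯∫⁻_(Finset.univ.erase k), fun x ↦ μ k {y | update x k y ∈ G} ∂μ) x := by
    rw [← lintegral_indicator_one hG, lintegral_eq_lmarginal_univ x,
      lmarginal_erase' _ (measurable_one.indicator hG) (Finset.mem_univ k)]
    congr 1
    ext x
    change _ = μ k (update x k ⁻¹' G)
    rw [← lintegral_indicator_one (measurable_update x hG)]
    rfl
  rw [hsection E hE, hsection F hF]
  exact lmarginal_mono h x

end MeasureTheory

namespace PositivelyAssociated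

variable {Γ : Type*} [Preorder Γ] [MeasurableSpace Γ] {m : Measure Γ} [IsProbabilityMeasure m]

theorem measure_inter_compl_le (hm : PositivelyAssociated m) {P Q : Set Γ}
    (hP : IsUpperSet P) (hQ : IsUpperSet Q) (hQm : MeasurableSet Q) :
    m (P ∩ Qᶜ) ≤ m P * m Qᶜ := by
  refine (ENNReal.add_le_add_iff_left (measure_ne_top m (P ∩ Q))).mp ?_
  calc m (P ∩ Q) + m (P ∩ Qᶜ) = m P := by rw [← sdiff_eq, measure_inter_add_sdiff P hQm]
    _ = m P * m Q + m P * m Qᶜ := by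
      rw [← mul_add, measure_add_measure_compl hQm, measure_univ, mul_one]
    _ ≤ m (P ∩ Q) + m P * m Qᶜ := by gcongr; exact hm P Q hP hQ

theorem measure_union_sdiff_le_prod (hm : PositivelyAssociated m) {U V W : Set Γ}
    (hU : IsUpperSet U) (hV : IsUpperSet V) (hW : IsUpperSet W)
    (hVm : MeasurableSet V) (hWm : MeasurableSet W) :
    m ((U ∪ V) \ W) ≤ (m.prod m) (U ×ˢ (V ∪ W)ᶜ ∪ univ ×ˢ (V \ W)) := by
  have hdisj : Disjoint (U ×ˢ (V ∪ W)ᶜ) (univ ×ˢ (V \ W)) :=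
    disjoint_prod.2 <| .inr <|
      disjoint_compl_left.mono_right <| sdiff_subset.trans subset_union_left
  have hsplit : (U ∪ V) \ W ⊆ U ∩ (V ∪ W)ᶜ ∪ V \ W := by
    intro x
    simp only [mem_union, mem_sdiff, mem_inter_iff, mem_compl_iff]
    tauto
  calc m ((U ∪ V) \ W) ≤ m (U ∩ (V ∪ W)ᶜ) + m (V \ W) :=
        (measure_mono hsplit).trans (measure_union_le _ _)
    _ ≤ m U * m (V ∪ W)ᶜ + m (V \ W) := by
      gcongr; exact hm.measure_inter_compl_le hU (hV.union hW) (hVm.union hWm)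
    _ = _ := by
      rw [measure_union hdisj (MeasurableSet.univ.prod (hVm.diff hWm)), Measure.prod_prod,
        Measure.prod_prod, measure_univ, one_mul]

end PositivelyAssociated

section DisjointOccurrence

variable {ι : Type*} {Ω : ι → Type*}

def OccursOn (A : Set (∀ i, Ω i)) (S : Finset ι) (ω : ∀ i, Ω i) : Prop :=
  ∀ ω' : ∀ i, Ω i, (∀ i ∈ S, ω' i = ω i) → ω' ∈ A

theorem OccursOn.mem {A : Set (∀ i, Ω i)} {S : Finset ι} {ω : ∀ i, Ω i}
    (h : OccursOn A S ω) : ω ∈ A :=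
  h ω fun _ _ ↦ rfl

theorem OccursOn.congr {A : Set (∀ i, Ω i)} {S : Finset ι} {ω ω' : ∀ i, Ω i}
    (h : OccursOn A S ω) (hω : ∀ i ∈ S, ω' i = ω i) : OccursOn A S ω' :=
  fun ω'' hω'' ↦ h ω'' fun i hi ↦ (hω'' i hi).trans (hω i hi)

theorem OccursOn.mono [∀ i, Preorder (Ω i)] {A : Set (∀ i, Ω i)} (hA : IsUpperSet A)
    {S : Finset ι} {ω ω' : ∀ i, Ω i} (hω : ω ≤ ω') (h : OccursOn A S ω) :
    OccursOn A S ω' := by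
  classical
  intro ω'' hω''
  refine hA (fun i ↦ ?_) (h (fun i ↦ if i ∈ S then ω i else ω'' i) fun i hi ↦ if_pos hi)
  by_cases hi : i ∈ S
  · simpa [hi, hω'' i hi] using hω i
  · simp [hi]

def disjOcc (A B : Set (∀ i, Ω i)) : Set (∀ i, Ω i) :=
  {ω | ∃ S T : Finset ι, Disjoint S T ∧ OccursOn A S ω ∧ OccursOn B T ω}

infixl:70 " □ " => disjOcc

end DisjointOccurrence

section Hybrid

variable {ι : Type*} [DecidableEq ι] {Ω : ι → Type*}

def hybridPoint (K : Finset ι) (z : ∀ i, Ω i × Ω i) : ∀ i, Ω i :=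
  fun i ↦ if i ∈ K then (z i).2 else (z i).1

@[simp]
theorem hybridPoint_empty (z : ∀ i, Ω i × Ω i) : hybridPoint ∅ z = fun i ↦ (z i).1 :=
  rfl

@[simp]
theorem hybridPoint_univ [Fintype ι] (z : ∀ i, Ω i × Ω i) :
    hybridPoint Finset.univ z = fun i ↦ (z i).2 := by
  funext i
  simp [hybridPoint]

/-- Interpolates between `(A □ G) \ H` in the first copy (`K = ∅`) and `A` in the first copy
with `G \ H` in the second (`K = univ`): `G` and `H` are read off the hybrid point, which takes
the coordinates in `K` from the second copy, and the witnesses of `A` and `G` only need to be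
disjoint outside `K`. -/
def hybrid (A G H : Set (∀ i, Ω i)) (K : Finset ι) : Set (∀ i, Ω i × Ω i) :=
  {z | (∃ S T : Finset ι, Disjoint (S \ K) (T \ K) ∧
      OccursOn A S (fun i ↦ (z i).1) ∧ OccursOn G T (hybridPoint K z)) ∧ hybridPoint K z ∉ H}

theorem hybrid_empty (A G H : Set (∀ i, Ω i)) :
    hybrid A G H ∅ = Equiv.arrowProdEquivProdArrow ι Ω Ω ⁻¹' (((A □ G) \ H) ×ˢ univ) := by
  ext z
  simp [hybrid, disjOcc]

theorem hybrid_univ_subset [Fintype ι] (A G H : Set (∀ i, Ω i)) :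
    hybrid A G H Finset.univ ⊆ Equiv.arrowProdEquivProdArrow ι Ω Ω ⁻¹' (A ×ˢ (G \ H)) := by
  rintro z ⟨⟨S, T, -, hA, hG⟩, hH⟩
  rw [hybridPoint_univ] at hG hH
  exact ⟨hA.mem, hG.mem, hH⟩

/-! In terms of the values `(s, t)` of `z` at `k`, the sections of `hybrid A G H K` and
`hybrid A G H (insert k K)` along coordinate `k` are controlled by the following three sets. -/

def pivotA (A G : Set (∀ i, Ω i)) (K : Finset ι) (k : ι) (z : ∀ i, Ω i × Ω i) : Set (Ω k) :=
  {s | ∃ S T : Finset ι, k ∈ S ∧ k ∉ T ∧ Disjoint (S \ insert k K) (T \ insert k K) ∧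
    OccursOn A S (update (fun i ↦ (z i).1) k s) ∧ OccursOn G T (hybridPoint K z)}

def pivotG (A G : Set (∀ i, Ω i)) (K : Finset ι) (k : ι) (z : ∀ i, Ω i × Ω i) : Set (Ω k) :=
  {t | ∃ S T : Finset ι, k ∉ S ∧ Disjoint (S \ insert k K) (T \ insert k K) ∧
    OccursOn A S (fun i ↦ (z i).1) ∧ OccursOn G T (update (hybridPoint K z) k t)}

def pivotH (H : Set (∀ i, Ω i)) (K : Finset ι) (k : ι) (z : ∀ i, Ω i × Ω i) : Set (Ω k) :=
  {t | update (hybridPoint K z) k t ∈ H}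

variable {A G H : Set (∀ i, Ω i)} {K : Finset ι} {k : ι} {z : ∀ i, Ω i × Ω i}

theorem fst_update_pair (s t : Ω k) :
    (fun i ↦ (update z k (s, t) i).1) = update (fun i ↦ (z i).1) k s := by
  funext i
  rcases eq_or_ne i k with rfl | hik <;> simp [update_of_ne, *]

theorem hybridPoint_update (hk : k ∉ K) (s t : Ω k) :
    hybridPoint K (update z k (s, t)) = update (hybridPoint K z) k s := by
  funext i
  rcases eq_or_ne i k with rfl | hik <;> simp [hybridPoint, update_of_ne, *]

theorem hybridPoint_insert_update (hk : k ∉ K) (s t : Ω k) :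
    hybridPoint (insert k K) (update z k (s, t)) = update (hybridPoint K z) k t := by
  funext i
  rcases eq_or_ne i k with rfl | hik <;> simp [hybridPoint, update_of_ne, *]

theorem setOf_update_mem_hybrid_subset (hk : k ∉ K) :
    {p | update z k p ∈ hybrid A G H K} ⊆
      ((pivotA A G K k z ∪ pivotG A G K k z) \ pivotH H K k z) ×ˢ univ := by
  rintro ⟨s, t⟩ ⟨⟨S, T, hST, hA, hG⟩, hH⟩
  rw [fst_update_pair] at hA
  rw [hybridPoint_update hk] at hG hH
  have hST' : Disjoint (S \ insert k K) (T \ insert k K) :=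
    hST.mono (Finset.sdiff_subset_sdiff le_rfl (Finset.subset_insert _ _))
      (Finset.sdiff_subset_sdiff le_rfl (Finset.subset_insert _ _))
  refine ⟨⟨?_, hH⟩, trivial⟩
  by_cases hkS : k ∈ S
  · have hkT : k ∉ T := fun hkT ↦
      Finset.disjoint_left.mp hST (Finset.mem_sdiff.2 ⟨hkS, hk⟩) (Finset.mem_sdiff.2 ⟨hkT, hk⟩)
    exact Or.inl ⟨S, T, hkS, hkT, hST', hA,
      hG.congr fun i hi ↦ (update_of_ne (ne_of_mem_of_not_mem hi hkT) _ _).symm⟩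
  · exact Or.inr ⟨S, T, hkS, hST',
      hA.congr fun i hi ↦ by rw [update_of_ne (ne_of_mem_of_not_mem hi hkS)], hG⟩

theorem subset_setOf_update_mem_hybrid_insert (hk : k ∉ K) :
    pivotA A G K k z ×ˢ (pivotG A G K k z ∪ pivotH H K k z)ᶜ ∪
        univ ×ˢ (pivotG A G K k z \ pivotH H K k z) ⊆
      {p | update z k p ∈ hybrid A G H (insert k K)} := by
  rintro ⟨s, t⟩ (⟨⟨S, T, -, hkT, hST, hA, hG⟩, ht⟩ | ⟨-, ⟨S, T, hkS, hST, hA, hG⟩, hH⟩)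
  · refine ⟨⟨S, T, hST, by rwa [fst_update_pair], ?_⟩, ?_⟩
    · rw [hybridPoint_insert_update hk]
      exact hG.congr fun i hi ↦ update_of_ne (ne_of_mem_of_not_mem hi hkT) _ _
    · rw [hybridPoint_insert_update hk]
      exact fun hH ↦ ht (Or.inr hH)
  · refine ⟨⟨S, T, hST, ?_, by rwa [hybridPoint_insert_update hk]⟩,
      by rwa [hybridPoint_insert_update hk]⟩
    rw [fst_update_pair]
    exact hA.congr fun i hi ↦ update_of_ne (ne_of_mem_of_not_mem hi hkS) _ _

variable [∀ i, Preorder (Ω i)]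

theorem isUpperSet_pivotA (hA : IsUpperSet A) : IsUpperSet (pivotA A G K k z) :=
  fun _ _ hs ⟨S, T, hkS, hkT, hST, hA', hG⟩ ↦
    ⟨S, T, hkS, hkT, hST, hA'.mono hA (update_mono hs), hG⟩

theorem isUpperSet_pivotG (hG : IsUpperSet G) : IsUpperSet (pivotG A G K k z) :=
  fun _ _ ht ⟨S, T, hkS, hST, hA, hG'⟩ ↦ ⟨S, T, hkS, hST, hA, hG'.mono hG (update_mono ht)⟩

theorem isUpperSet_pivotH (hH : IsUpperSet H) : IsUpperSet (pivotH H K k z) :=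
  fun _ _ ht hH' ↦ hH (update_mono ht) hH'

theorem measure_setOf_update_mem_hybrid_le_insert [MeasurableSpace (Ω k)]
    [DiscreteMeasurableSpace (Ω k)] {μ : Measure (Ω k)} [IsProbabilityMeasure μ]
    (hμ : PositivelyAssociated μ) (hA : IsUpperSet A) (hG : IsUpperSet G) (hH : IsUpperSet H)
    (hk : k ∉ K) :
    (μ.prod μ) {p | update z k p ∈ hybrid A G H K} ≤
      (μ.prod μ) {p | update z k p ∈ hybrid A G H (insert k K)} :=
  calc (μ.prod μ) {p | update z k p ∈ hybrid A G H K}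
      ≤ (μ.prod μ) (((pivotA A G K k z ∪ pivotG A G K k z) \ pivotH H K k z) ×ˢ univ) :=
        measure_mono (setOf_update_mem_hybrid_subset hk)
    _ = μ ((pivotA A G K k z ∪ pivotG A G K k z) \ pivotH H K k z) := by
        rw [Measure.prod_prod, measure_univ, mul_one]
    _ ≤ (μ.prod μ) (pivotA A G K k z ×ˢ (pivotG A G K k z ∪ pivotH H K k z)ᶜ ∪
          univ ×ˢ (pivotG A G K k z \ pivotH H K k z)) :=
        hμ.measure_union_sdiff_le_prod (isUpperSet_pivotA hA) (isUpperSet_pivotG hG)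
          (isUpperSet_pivotH hH) .of_discrete .of_discrete
    _ ≤ _ := measure_mono (subset_setOf_update_mem_hybrid_insert hk)

end Hybrid

theorem measure_disjOcc_sdiff_le {ι : Type*} [Fintype ι] {Ω : ι → Type*} [∀ i, Finite (Ω i)]
    [∀ i, PartialOrder (Ω i)] [∀ i, MeasurableSpace (Ω i)] [∀ i, MeasurableSingletonClass (Ω i)]
    (μ : ∀ i, Measure (Ω i)) [∀ i, IsProbabilityMeasure (μ i)]
    (hμ : ∀ i, PositivelyAssociated (μ i)) {A G H : Set (∀ i, Ω i)}
    (hA : IsUpperSet A) (hG : IsUpperSet G) (hH : IsUpperSet H) :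
    Measure.pi μ ((A □ G) \ H) ≤ Measure.pi μ A * Measure.pi μ (G \ H) := by
  classical
  set ν := Measure.pi fun i ↦ (μ i).prod (μ i)
  have he := measurePreserving_arrowProdEquivProdArrow_of_finite μ μ
  have hmono (K : Finset ι) : ν (hybrid A G H ∅) ≤ ν (hybrid A G H K) := by
    induction K using Finset.induction_on with
    | empty => exact le_rfl
    | @insert k K hk ih =>
      exact ih.trans <| Measure.pi_le_pi_of_update_le _ .of_discrete .of_discrete k
        fun _ ↦ measure_setOf_update_mem_hybrid_le_insert (hμ k) hA hG hH hk
  calc Measure.pi μ ((A □ G) \ H)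
      = ((Measure.pi μ).prod (Measure.pi μ)) (((A □ G) \ H) ×ˢ univ) := by
        rw [Measure.prod_prod, measure_univ, mul_one]
    _ = ν (hybrid A G H ∅) := by
        rw [hybrid_empty, he.measure_preimage MeasurableSet.of_discrete.nullMeasurableSet]
    _ ≤ ν (hybrid A G H Finset.univ) := hmono _
    _ ≤ ν (Equiv.arrowProdEquivProdArrow ι Ω Ω ⁻¹' (A ×ˢ (G \ H))) :=
        measure_mono (hybrid_univ_subset A G H)
    _ = Measure.pi μ A * Measure.pi μ (G \ H) := by
        rw [he.measure_preimage MeasurableSet.of_discrete.nullMeasurableSet, Measure.prod_prod]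

section Counting

variable {n k : ℕ} {Ω : Fin n → Type*} {A : Fin k → Set (∀ i, Ω i)}

theorem OccurDisjointly.mono {I I' : Finset (Fin k)} (hI : I' ⊆ I) {ω : ∀ i, Ω i}
    (h : OccurDisjointly A I ω) : OccurDisjointly A I' ω := by
  obtain ⟨S, hS, hA⟩ := h
  exact ⟨S, fun j hj j' hj' ↦ hS j (hI hj) j' (hI hj'), fun j hj ↦ hA j (hI hj)⟩

variable (A) in
def atLeastDisjOcc (J : Finset (Fin k)) (m : ℕ) : Set (∀ i, Ω i) :=
  {ω | ∃ I ⊆ J, I.card = m ∧ OccurDisjointly A I ω}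

theorem atLeastDisjOcc_anti {J : Finset (Fin k)} {m m' : ℕ} (h : m ≤ m') :
    atLeastDisjOcc A J m' ⊆ atLeastDisjOcc A J m := by
  rintro ω ⟨I, hIJ, rfl, hI⟩
  obtain ⟨I', hI'I, rfl⟩ := Finset.exists_subset_card_eq h
  exact ⟨I', hI'I.trans hIJ, rfl, hI.mono hI'I⟩

theorem atLeastDisjOcc_empty_succ (m : ℕ) :
    atLeastDisjOcc A ∅ (m + 1) = (∅ : Set (∀ i, Ω i)) := by
  ext ω
  simp [atLeastDisjOcc]

theorem isUpperSet_atLeastDisjOcc [∀ i, Preorder (Ω i)] (hA : ∀ j, IsUpperSet (A j))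
    (J : Finset (Fin k)) (m : ℕ) : IsUpperSet (atLeastDisjOcc A J m) := by
  rintro ω ω' hω ⟨I, hIJ, hcard, S, hS, hI⟩
  exact ⟨I, hIJ, hcard, S, hS, fun j hj ↦ OccursOn.mono (hA j) hω (hI j hj)⟩

theorem le_maxDisjOcc_iff {m : ℕ} {ω : ∀ i, Ω i} :
    m ≤ maxDisjOcc A ω ↔ ω ∈ atLeastDisjOcc A Finset.univ m := by
  set N := {m | ∃ I : Finset (Fin k), I.card = m ∧ OccurDisjointly A I ω}
  have hne : N.Nonempty := ⟨0, ∅, rfl, fun _ ↦ ∅, by simp, by simp⟩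
  have hbdd : BddAbove N := ⟨k, by rintro _ ⟨I, rfl, -⟩; simpa using I.card_le_univ⟩
  constructor
  · intro h
    obtain ⟨I, hcard, hI⟩ := Nat.sSup_mem hne hbdd
    exact atLeastDisjOcc_anti h ⟨I, I.subset_univ, hcard, hI⟩
  · rintro ⟨I, -, rfl, hI⟩
    exact le_csSup hbdd ⟨I, rfl, hI⟩

/-- The witnesses of the events other than `A j` together witness `atLeastDisjOcc A J m`. -/
theorem atLeastDisjOcc_insert_succ_subset (j : Fin k) (J : Finset (Fin k)) (m : ℕ) :
    atLeastDisjOcc A (insert j J) (m + 1) ⊆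
      atLeastDisjOcc A J (m + 1) ∪ (A j □ atLeastDisjOcc A J m) := by
  classical
  rintro ω ⟨I, hIJ, hcard, S, hS, hI⟩
  by_cases hjI : j ∈ I
  swap
  · exact Or.inl ⟨I, fun i hi ↦ (Finset.mem_insert.1 (hIJ hi)).resolve_left
      (ne_of_mem_of_not_mem hi hjI), hcard, S, hS, hI⟩
  refine Or.inr ⟨S j, (I.erase j).biUnion S, ?_, hI j hjI, fun ω' hω' ↦ ?_⟩
  · exact (Finset.disjoint_biUnion_right _ _ _).2 fun i hi ↦
      hS j hjI i (Finset.mem_of_mem_erase hi) (Finset.ne_of_mem_erase hi).symm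
  refine ⟨I.erase j, fun i hi ↦ ?_, by rw [Finset.card_erase_of_mem hjI, hcard]; rfl,
    S, fun i hi i' hi' ↦ hS i (Finset.mem_of_mem_erase hi) i' (Finset.mem_of_mem_erase hi'),
    fun i hi ↦ OccursOn.congr (hI i (Finset.mem_of_mem_erase hi))
      fun l hl ↦ hω' l (Finset.mem_biUnion.2 ⟨i, hi, hl⟩)⟩
  exact (Finset.mem_insert.1 (hIJ (Finset.mem_of_mem_erase hi))).resolve_left
    (Finset.ne_of_mem_erase hi)

theorem measure_atLeastDisjOcc_insert_succ_le [∀ i, Finite (Ω i)] [∀ i, PartialOrder (Ω i)]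
    [∀ i, MeasurableSpace (Ω i)] [∀ i, MeasurableSingletonClass (Ω i)]
    (μ : ∀ i, Measure (Ω i)) [∀ i, IsProbabilityMeasure (μ i)]
    (hμ : ∀ i, PositivelyAssociated (μ i)) (hA : ∀ j, IsUpperSet (A j))
    (j : Fin k) (J : Finset (Fin k)) (m : ℕ) :
    Measure.pi μ (atLeastDisjOcc A (insert j J) (m + 1)) ≤
      Measure.pi μ (atLeastDisjOcc A J (m + 1)) +
        Measure.pi μ (A j) * Measure.pi μ (atLeastDisjOcc A J m \ atLeastDisjOcc A J (m + 1)) :=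
  calc Measure.pi μ (atLeastDisjOcc A (insert j J) (m + 1))
      ≤ Measure.pi μ (atLeastDisjOcc A J (m + 1) ∪
          (A j □ atLeastDisjOcc A J m) \ atLeastDisjOcc A J (m + 1)) := by
        rw [union_sdiff_self]
        exact measure_mono (atLeastDisjOcc_insert_succ_subset j J m)
    _ ≤ _ := by
        refine (measure_union_le _ _).trans (add_le_add_right ?_ _)
        exact measure_disjOcc_sdiff_le μ hμ (hA j) (isUpperSet_atLeastDisjOcc hA J m)
          (isUpperSet_atLeastDisjOcc hA J (m + 1))

end Counting

section Bernoulli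

variable {Θ : Type*} [MeasurableSpace Θ] {ν : Measure Θ} {B S : Θ → ℕ}

theorem measure_eq_one_add_measure_eq_zero [IsProbabilityMeasure ν] (hBm : Measurable B)
    (hB : ∀ θ, B θ ≤ 1) : ν {θ | B θ = 1} + ν {θ | B θ = 0} = 1 := by
  rw [show {θ | B θ = 0} = {θ | B θ = 1}ᶜ by
    ext θ
    have := hB θ
    simp only [mem_ofPred_eq, mem_compl_iff]
    omega]
  exact prob_add_prob_compl (hBm (measurableSet_singleton 1))

theorem measure_succ_le_add_of_indepFun (hBm : Measurable B) (hSm : Measurable S)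
    (hind : IndepFun B S ν) (hB : ∀ θ, B θ ≤ 1) (m : ℕ) :
    ν {θ | m + 1 ≤ B θ + S θ} =
      ν {θ | B θ = 1} * ν {θ | m ≤ S θ} + ν {θ | B θ = 0} * ν {θ | m + 1 ≤ S θ} := by
  have hsplit : {θ | m + 1 ≤ B θ + S θ} =
      B ⁻¹' {1} ∩ S ⁻¹' Ici m ∪ B ⁻¹' {0} ∩ S ⁻¹' Ici (m + 1) := by
    ext θ
    have := hB θ
    simp only [mem_ofPred_eq, mem_union, mem_inter_iff, mem_preimage, mem_singleton_iff, mem_Ici]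
    omega
  have hdisj : Disjoint (B ⁻¹' {1} ∩ S ⁻¹' Ici m) (B ⁻¹' {0} ∩ S ⁻¹' Ici (m + 1)) :=
    ((disjoint_singleton.2 one_ne_zero).preimage B).mono inter_subset_left inter_subset_left
  rw [hsplit, measure_union hdisj ((hBm (measurableSet_singleton 0)).inter (hSm measurableSet_Ici)),
    hind.measure_inter_preimage_eq_mul _ _ (measurableSet_singleton 1) measurableSet_Ici,
    hind.measure_inter_preimage_eq_mul _ _ (measurableSet_singleton 0) measurableSet_Ici]
  rfl

end Bernoulli

section Domination

variable {n k : ℕ} {Ω : Fin n → Type*} [∀ i, Finite (Ω i)] [∀ i, PartialOrder (Ω i)]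
  [∀ i, MeasurableSpace (Ω i)] [∀ i, MeasurableSingletonClass (Ω i)]
  {μ : ∀ i, Measure (Ω i)} [∀ i, IsProbabilityMeasure (μ i)] {A : Fin k → Set (∀ i, Ω i)}
  {Θ : Type*} [MeasurableSpace Θ] {ν : Measure Θ} [IsProbabilityMeasure ν] {Y : Fin k → Θ → ℕ}

theorem measure_atLeastDisjOcc_insert_succ_le_of_le (hμ : ∀ i, PositivelyAssociated (μ i))
    (hA : ∀ j, IsUpperSet (A j)) (hYmeas : ∀ i, Measurable (Y i)) (hYindep : iIndepFun Y ν)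
    (hYbernoulli : ∀ i θ, Y i θ ≤ 1) (hYmean : ∀ i, ν {θ | Y i θ = 1} = Measure.pi μ (A i))
    {j : Fin k} {J : Finset (Fin k)} (hj : j ∉ J) {m : ℕ}
    (hG : Measure.pi μ (atLeastDisjOcc A J m) ≤ ν {θ | m ≤ ∑ i ∈ J, Y i θ})
    (hH : Measure.pi μ (atLeastDisjOcc A J (m + 1)) ≤ ν {θ | m + 1 ≤ ∑ i ∈ J, Y i θ}) :
    Measure.pi μ (atLeastDisjOcc A (insert j J) (m + 1)) ≤
      ν {θ | m + 1 ≤ ∑ i ∈ insert j J, Y i θ} := by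
  have hpq := measure_eq_one_add_measure_eq_zero (ν := ν) (hYmeas j) (hYbernoulli j)
  have hind : IndepFun (Y j) (fun θ ↦ ∑ i ∈ J, Y i θ) ν := by
    simpa only [Finset.sum_fn] using (hYindep.indepFun_finsetSum_of_notMem hYmeas hj).symm
  have hstep := measure_atLeastDisjOcc_insert_succ_le μ hμ hA j J m
  rw [← hYmean j] at hstep
  set P := Measure.pi μ
  set G := atLeastDisjOcc A J m
  set H := atLeastDisjOcc A J (m + 1)
  set p := ν {θ | Y j θ = 1}
  set q := ν {θ | Y j θ = 0}
  calc P (atLeastDisjOcc A (insert j J) (m + 1))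
      ≤ (p + q) * P H + p * P (G \ H) := by rwa [hpq, one_mul]
    _ = q * P H + p * (P H + P (G \ H)) := by ring
    _ = q * P H + p * P G := by
        rw [measure_add_sdiff MeasurableSet.of_discrete.nullMeasurableSet,
          union_eq_right.2 (atLeastDisjOcc_anti m.le_succ)]
    _ ≤ q * ν {θ | m + 1 ≤ ∑ i ∈ J, Y i θ} + p * ν {θ | m ≤ ∑ i ∈ J, Y i θ} := by gcongr
    _ = ν {θ | m + 1 ≤ ∑ i ∈ insert j J, Y i θ} := by
        simp_rw [Finset.sum_insert hj]
        rw [measure_succ_le_add_of_indepFun (hYmeas j)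
          (Finset.measurable_sum J fun i _ ↦ hYmeas i) hind (hYbernoulli j), add_comm]

theorem measure_atLeastDisjOcc_le (hμ : ∀ i, PositivelyAssociated (μ i))
    (hA : ∀ j, IsUpperSet (A j)) (hYmeas : ∀ i, Measurable (Y i)) (hYindep : iIndepFun Y ν)
    (hYbernoulli : ∀ i θ, Y i θ ≤ 1) (hYmean : ∀ i, ν {θ | Y i θ = 1} = Measure.pi μ (A i))
    (J : Finset (Fin k)) (m : ℕ) :
    Measure.pi μ (atLeastDisjOcc A J m) ≤ ν {θ | m ≤ ∑ i ∈ J, Y i θ} := by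
  classical
  induction J using Finset.induction_on generalizing m with
  | empty =>
    cases m with
    | zero => simpa using prob_le_one
    | succ m => simp [atLeastDisjOcc_empty_succ]
  | @insert j J hj ih =>
    cases m with
    | zero => simpa using prob_le_one
    | succ m =>
      exact measure_atLeastDisjOcc_insert_succ_le_of_le hμ hA hYmeas hYindep hYbernoulli hYmean
        hj (ih m) (ih (m + 1))

end Domination

/-- **Extended BK inequality (increasing events), stochastic domination form.**
In a finite product probability space with positively associated factors, if
`A 1, …, A k` are increasing events and `X` is the maximal number of them occurring
disjointly, then `X` is stochastically dominated by a sum `Y` of independent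
Bernoulli random variables `Y i` with means `μ (A i)`. -/
theorem extended_BK_increasing
    {n k : ℕ} {Ω : Fin n → Type*}
    [∀ i, Fintype (Ω i)] [∀ i, PartialOrder (Ω i)]
    [∀ i, MeasurableSpace (Ω i)] [∀ i, MeasurableSingletonClass (Ω i)]
    (μi : ∀ i, Measure (Ω i)) [∀ i, IsProbabilityMeasure (μi i)]
    (hPA : ∀ i, PositivelyAssociated (μi i))
    (A : Fin k → Set (∀ i, Ω i))
    (hA : ∀ j, IsUpperSet (A j))
    -- an abstract probability space carrying the independent Bernoulli variables
    {Θ : Type*} [MeasurableSpace Θ] (ν : Measure Θ) [IsProbabilityMeasure ν]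
    (Y : Fin k → Θ → ℕ)
    (hYmeas : ∀ i, Measurable (Y i))
    (hYindep : iIndepFun Y ν)
    (hYbernoulli : ∀ i θ, Y i θ ≤ 1)
    (hYmean : ∀ i, ν {θ | Y i θ = 1} = Measure.pi μi (A i)) :
    ∀ r : ℝ,
      Measure.pi μi {ω | r ≤ (maxDisjOcc A ω : ℝ)} ≤
        ν {θ | r ≤ ((∑ i, Y i θ : ℕ) : ℝ)} := by
  intro r
  have hX : {ω | r ≤ (maxDisjOcc A ω : ℝ)} = atLeastDisjOcc A Finset.univ ⌈r⌉₊ := by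
    ext ω
    rw [mem_ofPred_eq, ← Nat.ceil_le, le_maxDisjOcc_iff]
  have hY : {θ | r ≤ ((∑ i, Y i θ : ℕ) : ℝ)} = {θ | ⌈r⌉₊ ≤ ∑ i ∈ Finset.univ, Y i θ} := by
    ext θ
    rw [mem_ofPred_eq, mem_ofPred_eq, Nat.ceil_le]
  rw [hX, hY]
  exact measure_atLeastDisjOcc_le hPA hA hYmeas hYindep hYbernoulli hYmean _ _
end

section
/- Let (Ω,μ) = ∏_{i=1}^n (Ω_i,μ_i) be a finite product probability space in which each factor Ω_i is partially ordered and each μ_i is positively associated. Let A_1,…,A_k ⊆ Ω be events that are all decreasing, and define X(ω) = max{|I| : I ⊆ [k] and A_i, i ∈ I, occur disjointly at ω}. Let Y_1,…,Y_k be independent Bernoulli random variables with E Y_i = μ(A_i) and Y = Y_1 + ⋯ + Y_k. Then X is stochastically dominated by Y; that is, for every r ∈ ℝ, μ({ω : X(ω) ≥ r}) ≤ Pr(Y ≥ r). -/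
open MeasureTheory ProbabilityTheory

/-!
Write `D_J(m)` for the event that at least `m` of the events `A j`, `j ∈ J`, occur disjointly.
If `D_{J ∪ {a}}(m+1)` occurs but `D_J(m+1)` does not, then `A a □ D_J(m)` occurs. The BK-type
inequality `P(A □ B ∩ U) ≤ P(A) P(B ∩ U)`, for decreasing `A, B` and increasing `U`, applied with
`U` the complement of `D_J(m+1)`, gives
`P(D_{J ∪ {a}}(m+1)) ≤ (1 - p) P(D_J(m+1)) + p P(D_J(m))` with `p = P(A a)`. The tails of
`∑_{j ∈ J} Y j` satisfy this recursion with equality, so induction on `J` compares the two.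

The BK-type inequality is proved on two independent copies of the space. Read `A` off the
configuration that takes the coordinates in `t` from the second copy and the others from the
first, and `B`, `U` off the first copy: for `t = ∅` this is `A □ B ∩ U`, for `t = univ` it implies
the independent events `A` (second copy) and `B ∩ U` (first copy). Moving one coordinate into `t`
does not decrease the probability; conditionally on all other coordinates this is a statement
about the two copies of that coordinate, which reduces to Harris' inequality
`P(V ∩ L) ≤ P(V) P(L)` for increasing `V` and decreasing `L`, the place where positive
association enters.
-/

open Finset Function

namespace ExtendedBK

section Witness

variable {α : Type*} {κ : α → Type*}

def IsWitness (S : Finset α) (A : Set (∀ i, κ i)) (ω : ∀ i, κ i) : Prop :=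
  ∀ ω' : ∀ i, κ i, (∀ i ∈ S, ω' i = ω i) → ω' ∈ A

/-- The event `A □ B`. -/
def disjOcc (A B : Set (∀ i, κ i)) : Set (∀ i, κ i) :=
  {ω | ∃ S T, Disjoint S T ∧ IsWitness S A ω ∧ IsWitness T B ω}

def disjOccAvoiding (A B : Set (∀ i, κ i)) (F G : Finset α) : Set (∀ i, κ i) :=
  {ω | ∃ S T, Disjoint S T ∧ Disjoint S F ∧ Disjoint T G ∧ IsWitness S A ω ∧ IsWitness T B ω}

lemma dependsOn_mem_of_forall {X : Set (∀ i, κ i)} {s : Set α}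
    (h : ∀ ω ω' : ∀ i, κ i, (∀ i ∈ s, ω i = ω' i) → ω ∈ X → ω' ∈ X) : DependsOn (· ∈ X) s :=
  fun ω ω' hω => propext ⟨h ω ω' hω, h ω' ω fun i hi => (hω i hi).symm⟩

lemma mem_update_iff_of_dependsOn [DecidableEq α] {X : Set (∀ i, κ i)} {c : α}
    (hX : DependsOn (· ∈ X) {c}ᶜ) (ω : ∀ i, κ i) (x : κ c) : update ω c x ∈ X ↔ ω ∈ X :=
  (hX fun _ hi => update_of_ne hi _ _).to_iff

namespace IsWitness

variable {S : Finset α} {A : Set (∀ i, κ i)} {ω ω' : ∀ i, κ i}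

lemma mem (h : IsWitness S A ω) : ω ∈ A :=
  h ω fun _ _ => rfl

lemma congr (h : IsWitness S A ω) (hω : ∀ i ∈ S, ω' i = ω i) : IsWitness S A ω' :=
  fun ω'' h'' => h ω'' fun i hi => (h'' i hi).trans (hω i hi)

lemma of_le [∀ i, Preorder (κ i)] (hA : IsLowerSet A) (h : IsWitness S A ω) (hle : ω' ≤ ω) :
    IsWitness S A ω' := by
  classical
  intro ω'' h''
  refine hA (fun i => ?_) (h (S.piecewise ω ω'') fun i hi => S.piecewise_eq_of_mem _ _ hi)
  by_cases hi : i ∈ S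
  · simpa [hi, h'' i hi] using hle i
  · simp [hi]

lemma erase_of_dependsOn [DecidableEq α] {c : α} (hA : DependsOn (· ∈ A) {c}ᶜ)
    (h : IsWitness S A ω) : IsWitness (S.erase c) A ω := by
  intro ω' h'
  have hmem : S.piecewise ω ω' ∈ A := h _ fun i hi => S.piecewise_eq_of_mem _ _ hi
  refine (hA fun i (hi : i ≠ c) => ?_).mp hmem
  by_cases hiS : i ∈ S
  · rw [S.piecewise_eq_of_mem _ _ hiS, h' i (mem_erase.2 ⟨hi, hiS⟩)]
  · exact S.piecewise_eq_of_notMem _ _ hiS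

lemma preimage_update [DecidableEq α] {c : α} (hc : c ∉ S) (g : (∀ i, κ i) → κ c)
    (h : IsWitness S A ω) : IsWitness S ((fun ω => update ω c (g ω)) ⁻¹' A) ω :=
  fun _ h' => h _ fun i hi => (update_of_ne (ne_of_mem_of_not_mem hi hc) _ _).trans (h' i hi)

end IsWitness

variable {A B : Set (∀ i, κ i)} {F G : Finset α}

lemma isLowerSet_disjOccAvoiding [∀ i, Preorder (κ i)] (hA : IsLowerSet A) (hB : IsLowerSet B) :
    IsLowerSet (disjOccAvoiding A B F G) := by
  rintro ω ω' hle ⟨S, T, hST, hSF, hTG, hS, hT⟩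
  exact ⟨S, T, hST, hSF, hTG, hS.of_le hA hle, hT.of_le hB hle⟩

lemma dependsOn_disjOccAvoiding [DecidableEq α] :
    DependsOn (· ∈ disjOccAvoiding A B F G) (↑(F ∩ G))ᶜ := by
  refine dependsOn_mem_of_forall ?_
  rintro ω ω' hω ⟨S, T, hST, hSF, hTG, hS, hT⟩
  refine ⟨S, T, hST, hSF, hTG, hS.congr fun i hi => (hω i ?_).symm,
    hT.congr fun i hi => (hω i ?_).symm⟩
  · exact fun hFG => disjoint_left.1 hSF hi (mem_inter.1 hFG).1
  · exact fun hFG => disjoint_left.1 hTG hi (mem_inter.1 hFG).2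

lemma disjOcc_subset_avoiding [DecidableEq α] {c₁ c₂ : α} (hA : DependsOn (· ∈ A) {c₂}ᶜ)
    (hB : DependsOn (· ∈ B) {c₂}ᶜ) :
    disjOcc A B ⊆ disjOccAvoiding A B {c₁, c₂} {c₂} ∪ disjOccAvoiding A B {c₂} {c₁, c₂} := by
  rintro ω ⟨S, T, hST, hS, hT⟩
  have hST' : Disjoint (S.erase c₂) (T.erase c₂) := hST.mono (erase_subset _ _) (erase_subset _ _)
  have hS' := hS.erase_of_dependsOn hA
  have hT' := hT.erase_of_dependsOn hB
  by_cases hc₁ : c₁ ∈ S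
  · have hc₁T : c₁ ∉ T.erase c₂ := fun h => disjoint_left.1 hST hc₁ (mem_of_mem_erase h)
    exact Or.inr ⟨_, _, hST', by simp, by simp [hc₁T], hS', hT'⟩
  · exact Or.inl ⟨_, _, hST', by simp [hc₁], by simp, hS', hT'⟩

end Witness

section WeightedProbability

variable {γ γ' : Type*} {v : γ → ℝ}

def pairWeight (v : γ → ℝ) (v' : γ' → ℝ) (p : γ × γ') : ℝ :=
  v p.1 * v' p.2

lemma pairWeight_nonneg {v' : γ' → ℝ} (hv : 0 ≤ v) (hv' : 0 ≤ v') : 0 ≤ pairWeight v v' :=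
  fun p => mul_nonneg (hv p.1) (hv' p.2)

variable [Fintype γ] [Fintype γ'] {P Q : Set γ}

/-- A finite probability space is modelled by a weight `v` with `IsProbWeight v`, and `wprob v P`
is the probability of `P`. -/
noncomputable def wprob (v : γ → ℝ) (P : Set γ) : ℝ :=
  ∑ x, P.indicator v x

structure IsProbWeight (v : γ → ℝ) : Prop where
  nonneg : 0 ≤ v
  sum_eq_one : ∑ x, v x = 1

def IsPAWeight [Preorder γ] (v : γ → ℝ) : Prop :=
  ∀ P Q : Set γ, IsUpperSet P → IsUpperSet Q → wprob v P * wprob v Q ≤ wprob v (P ∩ Q)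

lemma wprob_nonneg (hv : 0 ≤ v) (P : Set γ) : 0 ≤ wprob v P :=
  sum_nonneg fun x _ => Set.indicator_nonneg (fun y _ => hv y) x

lemma wprob_mono (hv : 0 ≤ v) (h : P ⊆ Q) : wprob v P ≤ wprob v Q :=
  sum_le_sum fun x _ => Set.indicator_le_indicator_of_subset h hv x

lemma wprob_union (h : Disjoint P Q) : wprob v (P ∪ Q) = wprob v P + wprob v Q := by
  simp only [wprob, Set.indicator_union_of_disjoint h, sum_add_distrib]

lemma wprob_inter_add_diff (P Q : Set γ) : wprob v (P ∩ Q) + wprob v (P \ Q) = wprob v P := by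
  rw [← wprob_union (Set.disjoint_sdiff_inter.symm), Set.inter_union_sdiff]

lemma wprob_univ (v : γ → ℝ) : wprob v Set.univ = ∑ x, v x := by
  simp [wprob]

namespace IsProbWeight

lemma wprob_univ (hv : IsProbWeight v) : wprob v Set.univ = 1 := by
  rw [ExtendedBK.wprob_univ, hv.sum_eq_one]

lemma wprob_le_one (hv : IsProbWeight v) (P : Set γ) : wprob v P ≤ 1 :=
  hv.wprob_univ ▸ wprob_mono hv.nonneg (Set.subset_univ P)

lemma wprob_compl (hv : IsProbWeight v) (P : Set γ) : wprob v Pᶜ = 1 - wprob v P := by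
  rw [← hv.wprob_univ, ← wprob_inter_add_diff Set.univ P, Set.univ_inter, ← Set.compl_eq_univ_sdiff]
  ring

end IsProbWeight

lemma IsPAWeight.wprob_inter_le_mul [Preorder γ] (hPA : IsPAWeight v) (hv : IsProbWeight v)
    {V L : Set γ} (hV : IsUpperSet V) (hL : IsLowerSet L) :
    wprob v (V ∩ L) ≤ wprob v V * wprob v L := by
  have hcorr := hPA V Lᶜ hV hL.compl
  have hsplit := wprob_inter_add_diff (v := v) V L
  rw [hv.wprob_compl, ← Set.sdiff_eq] at hcorr
  linarith

lemma wprob_pairWeight_prod (v : γ → ℝ) (v' : γ' → ℝ) (P : Set γ) (Q : Set γ') :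
    wprob (pairWeight v v') (P ×ˢ Q) = wprob v P * wprob v' Q := by
  simp only [wprob, Fintype.sum_prod_type, sum_mul_sum]
  refine sum_congr rfl fun x _ => sum_congr rfl fun y _ => ?_
  by_cases hx : x ∈ P <;> by_cases hy : y ∈ Q <;> simp [pairWeight, hx, hy]

/-- Both sides contain `P(U ∩ L₁)`; the rest is Harris' inequality for `U \ L₁` and `L₂`. -/
lemma IsPAWeight.wprob_inter_union_le [Preorder γ] (hPA : IsPAWeight v) (hv : IsProbWeight v)
    {U L₁ L₂ : Set γ} (hU : IsUpperSet U) (hL₁ : IsLowerSet L₁) (hL₂ : IsLowerSet L₂) :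
    wprob v (U ∩ (L₁ ∪ L₂)) ≤ wprob (pairWeight v v) ((U ∩ L₁) ×ˢ Set.univ ∪ U ×ˢ L₂) := by
  have hright : (U ∩ L₁) ×ˢ Set.univ ∪ U ×ˢ L₂ = (U ∩ L₁) ×ˢ Set.univ ∪ (U \ L₁) ×ˢ L₂ := by
    ext ⟨x, y⟩
    simp only [Set.mem_union, Set.mem_prod, Set.mem_inter_iff, Set.mem_univ, Set.mem_sdiff]
    tauto
  have hleft : U ∩ (L₁ ∪ L₂) = U ∩ L₁ ∪ (U \ L₁) ∩ L₂ := by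
    ext x
    simp only [Set.mem_union, Set.mem_inter_iff, Set.mem_sdiff]
    tauto
  have hdisj : Disjoint (U ∩ L₁) (U \ L₁) := Set.disjoint_sdiff_inter.symm
  rw [hright, wprob_union (Set.disjoint_prod.2 (Or.inl hdisj)), wprob_pairWeight_prod,
    wprob_pairWeight_prod, hv.wprob_univ, mul_one, hleft,
    wprob_union (hdisj.mono_right Set.inter_subset_left)]
  exact add_le_add_right (hPA.wprob_inter_le_mul hv (hU.inter hL₁.compl) hL₂) _

lemma wprob_preimage_equiv {v' : γ' → ℝ} (e : γ ≃ γ') (hv : ∀ x, v x = v' (e x)) (X : Set γ') :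
    wprob v (e ⁻¹' X) = wprob v' X := by
  obtain rfl : v = v' ∘ e := funext hv
  simp only [wprob, Set.indicator_comp_right]
  exact e.sum_comp (X.indicator v')

end WeightedProbability

section ProductWeight

variable {α : Type*} [Fintype α] [DecidableEq α] {κ : α → Type*} {w : ∀ i, κ i → ℝ}

def piWeight (w : ∀ i, κ i → ℝ) (ω : ∀ i, κ i) : ℝ :=
  ∏ i, w i (ω i)

def slice (c₁ c₂ : α) (ω : ∀ i, κ i) (E : Set (∀ i, κ i)) : Set (κ c₁ × κ c₂) :=
  {p | update (update ω c₁ p.1) c₂ p.2 ∈ E}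

lemma piWeight_update_mul (ω : ∀ i, κ i) (c : α) (x : κ c) :
    piWeight w (update ω c x) * w c (ω c) = piWeight w ω * w c x := by
  simp only [piWeight, Fintype.prod_eq_mul_prod_compl c, update_self]
  rw [prod_congr rfl fun i hi => by rw [update_of_ne (by simpa using hi)]]
  ring

variable [∀ i, Fintype (κ i)]

lemma IsProbWeight.pi (hw : ∀ i, IsProbWeight (w i)) : IsProbWeight (piWeight w) where
  nonneg ω := prod_nonneg fun i _ => (hw i).nonneg (ω i)
  sum_eq_one := by
    simp only [piWeight, ← Fintype.prod_sum, (hw _).sum_eq_one, prod_const_one]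

/-- Resampling the coordinate `c` does not change the law: the involution
`(ω, x) ↦ (update ω c x, ω c)` exchanges the two sides. -/
lemma sum_piWeight_mul_eq_sum_update {c : α} (hc : ∑ x, w c x = 1) (f : (∀ i, κ i) → ℝ) :
    ∑ ω, piWeight w ω * f ω = ∑ ω, piWeight w ω * ∑ x, w c x * f (update ω c x) := by
  let e : Equiv.Perm ((∀ i, κ i) × κ c) :=
    Involutive.toPerm (fun p => (update p.1 c p.2, p.1 c)) fun p => by simp
  let g : (∀ i, κ i) × κ c → ℝ := fun p => piWeight w p.1 * w c p.2 * f p.1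
  calc ∑ ω, piWeight w ω * f ω = ∑ p, g p := by
        simp only [g, Fintype.sum_prod_type, mul_right_comm _ (w c _), ← mul_sum, hc, mul_one]
    _ = ∑ p : (∀ i, κ i) × κ c, g (update p.1 c p.2, p.1 c) := (Equiv.sum_comp e g).symm
    _ = ∑ ω, piWeight w ω * ∑ x, w c x * f (update ω c x) := by
        simp only [g, piWeight_update_mul]
        simp only [Fintype.sum_prod_type, mul_sum, mul_assoc]

lemma wprob_piWeight_eq_sum_slice {c₁ c₂ : α} (h₁ : ∑ x, w c₁ x = 1) (h₂ : ∑ x, w c₂ x = 1)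
    (E : Set (∀ i, κ i)) :
    wprob (piWeight w) E = ∑ ω, piWeight w ω *
      wprob (pairWeight (w c₁) (w c₂)) (slice c₁ c₂ ω E) := by
  have hE : wprob (piWeight w) E = ∑ ω, piWeight w ω * E.indicator 1 ω :=
    sum_congr rfl fun ω _ => by by_cases h : ω ∈ E <;> simp [h]
  rw [hE, sum_piWeight_mul_eq_sum_update h₂, sum_piWeight_mul_eq_sum_update h₁]
  simp only [wprob, Fintype.sum_prod_type, mul_sum]
  refine sum_congr rfl fun ω _ => sum_congr rfl fun x _ => sum_congr rfl fun y _ => ?_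
  by_cases h : update (update ω c₁ x) c₂ y ∈ E <;> simp [h, pairWeight, slice]

lemma wprob_piWeight_le_of_slice_le (hw : ∀ i, IsProbWeight (w i)) {c₁ c₂ : α}
    {E E' : Set (∀ i, κ i)}
    (h : ∀ ω, wprob (pairWeight (w c₁) (w c₂)) (slice c₁ c₂ ω E) ≤
      wprob (pairWeight (w c₁) (w c₂)) (slice c₁ c₂ ω E')) :
    wprob (piWeight w) E ≤ wprob (piWeight w) E' := by
  rw [wprob_piWeight_eq_sum_slice (hw c₁).sum_eq_one (hw c₂).sum_eq_one,
    wprob_piWeight_eq_sum_slice (hw c₁).sum_eq_one (hw c₂).sum_eq_one]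
  exact sum_le_sum fun ω _ => mul_le_mul_of_nonneg_left (h ω) ((IsProbWeight.pi hw).nonneg ω)

end ProductWeight

section Doubling

variable {ι : Type*} [DecidableEq ι] {κ : ι → Type*}

/-- A configuration of `∀ s : ι ⊕ ι, κ (fold s)` is a pair of configurations of `∀ i, κ i`
(`inl` the first copy, `inr` the second). Written with `Sum.casesOn` rather than `Sum.elim` so
that `κ (fold (.inl i))` unfolds to `κ i` at reducible transparency. -/
abbrev fold : ι ⊕ ι → ι :=
  fun s => Sum.casesOn s id id

def splice (t : Finset ι) (ω : ∀ s, κ (fold s)) : ∀ i, κ i :=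
  fun i => if i ∈ t then ω (.inr i) else ω (.inl i)

def copyCoord (a : ι) (ω : ∀ s, κ (fold s)) : ∀ s, κ (fold s) :=
  update ω (.inl a) (ω (.inr a))

lemma splice_empty (ω : ∀ s, κ (fold s)) : splice ∅ ω = fun i => ω (.inl i) := by
  ext i
  simp [splice]

lemma splice_insert {t : Finset ι} {a : ι} (ha : a ∉ t) :
    splice (κ := κ) (insert a t) = splice t ∘ copyCoord a := by
  funext ω i
  by_cases hia : i = a
  · subst hia
    simp [splice, copyCoord, ha]
  · by_cases hit : i ∈ t <;> simp [splice, copyCoord, hia, hit]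

lemma monotone_splice [∀ i, Preorder (κ i)] (t : Finset ι) : Monotone (splice (κ := κ) t) :=
  fun ω ω' h i => by by_cases hi : i ∈ t <;> simp only [splice, hi, if_true, if_false] <;> apply h

lemma dependsOn_preimage_splice {t : Finset ι} {a : ι} (ha : a ∉ t) (X : Set (∀ i, κ i)) :
    DependsOn (· ∈ splice t ⁻¹' X) {.inr a}ᶜ := by
  refine dependsOn_mem_of_forall fun ω ω' h (hω : splice t ω ∈ X) => ?_
  suffices splice t ω' = splice t ω from (this ▸ hω : splice t ω' ∈ X)
  funext i
  by_cases hi : i ∈ t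
  · simp only [splice, hi, if_true]
    refine (h (.inr i) ?_).symm
    simp only [Set.mem_compl_iff, Set.mem_singleton_iff, Sum.inr.injEq]
    rintro rfl
    exact ha hi
  · simp only [splice, hi, if_false]
    exact (h (.inl i) (by simp)).symm

lemma disjOcc_preimage_splice_empty_subset (A B : Set (∀ i, κ i)) :
    splice ∅ ⁻¹' disjOcc A B ⊆ disjOcc (splice ∅ ⁻¹' A) (splice ∅ ⁻¹' B) := by
  have lift : ∀ {S : Finset ι} {X : Set (∀ i, κ i)} {ω : ∀ s, κ (fold s)},
      IsWitness S X (splice ∅ ω) → IsWitness (S.map .inl) (splice ∅ ⁻¹' X) ω :=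
    fun h ω' h' => by
      simp only [Set.mem_preimage, splice_empty] at h ⊢
      exact h _ fun i hi => h' (.inl i) (mem_map_of_mem _ hi)
  rintro ω ⟨S, T, hST, hS, hT⟩
  exact ⟨_, _, (disjoint_map _).2 hST, lift hS, lift hT⟩

variable [Fintype ι]

lemma splice_univ (ω : ∀ s, κ (fold s)) : splice univ ω = fun i => ω (.inr i) := by
  ext i
  simp [splice]

variable [∀ i, Fintype (κ i)]

lemma wprob_splice_univ_inter_splice_empty (w : ∀ i, κ i → ℝ) (P Q : Set (∀ i, κ i)) :
    wprob (piWeight fun s => w (fold s)) (splice univ ⁻¹' P ∩ splice ∅ ⁻¹' Q) =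
      wprob (piWeight w) P * wprob (piWeight w) Q := by
  let e := Equiv.sumPiEquivProdPi fun s => κ (fold s)
  have hset : splice univ ⁻¹' P ∩ splice ∅ ⁻¹' Q = e ⁻¹' (Q ×ˢ P) := by
    ext ω
    simp [e, splice_empty, splice_univ, and_comm]
  rw [hset, wprob_preimage_equiv e (v' := pairWeight (piWeight w) (piWeight w))
    (fun ω => Fintype.prod_sum_type _), wprob_pairWeight_prod, mul_comm]

end Doubling

section Replacement

variable {ι : Type*} [DecidableEq ι] {κ : ι → Type*} {a : ι} {A B : Set (∀ s, κ (fold s))}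

lemma mem_disjOcc_copyCoord_of_avoiding {ω : ∀ s, κ (fold s)}
    (h : ω ∈ disjOccAvoiding A B {.inl a, .inr a} {.inr a}) :
    ω ∈ disjOcc (copyCoord a ⁻¹' A) B := by
  obtain ⟨S, T, hST, hSF, -, hS, hT⟩ := h
  exact ⟨S, T, hST, hS.preimage_update (fun h => disjoint_left.1 hSF h (by simp)) _, hT⟩

/-- The witness of `A` at `ζ`, with `.inl a` replaced by `.inr a`, works at `ω`. -/
lemma mem_disjOcc_copyCoord_of_swap {ω ζ : ∀ s, κ (fold s)}
    (h : ζ ∈ disjOccAvoiding A B {.inr a} {.inl a, .inr a}) (hswap : ω (.inr a) = ζ (.inl a))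
    (hagree : ∀ s, s ≠ .inl a → s ≠ .inr a → ω s = ζ s) :
    ω ∈ disjOcc (copyCoord a ⁻¹' A) B := by
  obtain ⟨S, T, hST, hSF, hTG, hS, hT⟩ := h
  have hS₂ : .inr a ∉ S := fun h => disjoint_left.1 hSF h (mem_singleton_self _)
  have hT₁ : .inl a ∉ T := fun h => disjoint_left.1 hTG h (by simp)
  have hT₂ : .inr a ∉ T := fun h => disjoint_left.1 hTG h (by simp)
  refine ⟨insert (.inr a) (S.erase (.inl a)), T,
    disjoint_insert_left.2 ⟨hT₂, hST.mono_left (erase_subset _ _)⟩, fun ω' h' => hS _ ?_,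
    hT.congr fun s hs => hagree s (ne_of_mem_of_not_mem hs hT₁) (ne_of_mem_of_not_mem hs hT₂)⟩
  intro s hs
  by_cases hs₁ : s = .inl a
  · subst hs₁
    simp [copyCoord, h' _ (mem_insert_self _ _), hswap]
  · rw [copyCoord, update_of_ne hs₁, h' s (mem_insert_of_mem (mem_erase.2 ⟨hs₁, hs⟩)),
      hagree s hs₁ (ne_of_mem_of_not_mem hs hS₂)]

variable [∀ i, Fintype (κ i)] [∀ i, Preorder (κ i)] {w : ∀ i, κ i → ℝ} {U : Set (∀ s, κ (fold s))}

/-- `L₁` (resp. `L₂`) collects the values of the first copy of `a` for which the witness of `A`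
(resp. `B`) can avoid both copies of `a`. The first slice lies in `(U₀ ∩ (L₁ ∪ L₂)) × univ`, the
second contains `(U₀ ∩ L₁) × univ ∪ U₀ × L₂`. -/
lemma wprob_slice_disjOcc_inter_le_copyCoord (hw : IsProbWeight (w a)) (hPA : IsPAWeight (w a))
    (hA : IsLowerSet A) (hB : IsLowerSet B) (hU : IsUpperSet U)
    (hAa : DependsOn (· ∈ A) {.inr a}ᶜ) (hBa : DependsOn (· ∈ B) {.inr a}ᶜ)
    (hUa : DependsOn (· ∈ U) {.inr a}ᶜ) (ω : ∀ s, κ (fold s)) :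
    wprob (pairWeight (w a) (w a)) (slice (.inl a) (.inr a) ω (disjOcc A B ∩ U)) ≤
      wprob (pairWeight (w a) (w a))
        (slice (.inl a) (.inr a) ω (disjOcc (copyCoord a ⁻¹' A) B ∩ U)) := by
  let σ : κ a → ∀ s, κ (fold s) := update ω (.inl a)
  have hσ : Monotone σ := update_mono
  have hdep : ∀ {F G : Finset (ι ⊕ ι)}, Sum.inr a ∈ F ∩ G →
      DependsOn (· ∈ disjOccAvoiding A B F G) {.inr a}ᶜ := fun h =>
    dependsOn_disjOccAvoiding.mono (Set.compl_subset_compl.2 (Set.singleton_subset_iff.2 h))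
  let U₀ := σ ⁻¹' U
  let L₁ := σ ⁻¹' disjOccAvoiding A B {.inl a, .inr a} {.inr a}
  let L₂ := σ ⁻¹' disjOccAvoiding A B {.inr a} {.inl a, .inr a}
  have hupd : ∀ {X : Set (∀ s, κ (fold s))}, DependsOn (· ∈ X) {.inr a}ᶜ →
      ∀ p : κ a × κ a, update (σ p.1) (.inr a) p.2 ∈ X ↔ σ p.1 ∈ X :=
    fun hX p => mem_update_iff_of_dependsOn hX _ _
  have hpos := pairWeight_nonneg hw.nonneg hw.nonneg
  calc _ ≤ wprob (pairWeight (w a) (w a)) ((U₀ ∩ (L₁ ∪ L₂)) ×ˢ Set.univ) := by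
        refine wprob_mono hpos fun p ⟨hAB, hUp⟩ => ⟨⟨(hupd hUa p).1 hUp, ?_⟩, trivial⟩
        rcases disjOcc_subset_avoiding hAa hBa hAB with h | h
        · exact Or.inl ((hupd (hdep (by simp)) p).1 h)
        · exact Or.inr ((hupd (hdep (by simp)) p).1 h)
    _ = wprob (w a) (U₀ ∩ (L₁ ∪ L₂)) := by rw [wprob_pairWeight_prod, hw.wprob_univ, mul_one]
    _ ≤ wprob (pairWeight (w a) (w a)) ((U₀ ∩ L₁) ×ˢ Set.univ ∪ U₀ ×ˢ L₂) :=
        hPA.wprob_inter_union_le hw (hU.preimage hσ)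
          ((isLowerSet_disjOccAvoiding hA hB).preimage hσ)
          ((isLowerSet_disjOccAvoiding hA hB).preimage hσ)
    _ ≤ _ := by
        refine wprob_mono hpos ?_
        rintro p (⟨⟨hUp, hL₁⟩, -⟩ | ⟨hUp, hL₂⟩)
        · exact ⟨mem_disjOcc_copyCoord_of_avoiding ((hupd (hdep (by simp)) p).2 hL₁),
            (hupd hUa p).2 hUp⟩
        · exact ⟨mem_disjOcc_copyCoord_of_swap hL₂ (by simp [σ]) fun s h₁ h₂ => by simp [σ, h₁, h₂],
            (hupd hUa p).2 hUp⟩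

lemma wprob_disjOcc_inter_le_copyCoord [Fintype ι] (hw : ∀ i, IsProbWeight (w i))
    (hPA : IsPAWeight (w a)) (hA : IsLowerSet A) (hB : IsLowerSet B) (hU : IsUpperSet U)
    (hAa : DependsOn (· ∈ A) {.inr a}ᶜ) (hBa : DependsOn (· ∈ B) {.inr a}ᶜ)
    (hUa : DependsOn (· ∈ U) {.inr a}ᶜ) :
    wprob (piWeight fun s => w (fold s)) (disjOcc A B ∩ U) ≤
      wprob (piWeight fun s => w (fold s)) (disjOcc (copyCoord a ⁻¹' A) B ∩ U) :=
  wprob_piWeight_le_of_slice_le (c₁ := .inl a) (c₂ := .inr a) (fun s => hw (fold s))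
    (wprob_slice_disjOcc_inter_le_copyCoord (hw a) hPA hA hB hU hAa hBa hUa)

end Replacement

section BK

variable {ι : Type*} [Fintype ι] [DecidableEq ι] {κ : ι → Type*} [∀ i, Fintype (κ i)]
  [∀ i, Preorder (κ i)] {w : ∀ i, κ i → ℝ}

theorem wprob_disjOcc_inter_le (hw : ∀ i, IsProbWeight (w i)) (hPA : ∀ i, IsPAWeight (w i))
    {A B U : Set (∀ i, κ i)} (hA : IsLowerSet A) (hB : IsLowerSet B) (hU : IsUpperSet U) :
    wprob (piWeight w) (disjOcc A B ∩ U) ≤ wprob (piWeight w) A * wprob (piWeight w) (B ∩ U) := by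
  let W := piWeight fun s => w (fold s)
  have hW : 0 ≤ W := (IsProbWeight.pi fun s => hw (fold s)).nonneg
  let E : Finset ι → Set (∀ s, κ (fold s)) := fun t =>
    disjOcc (splice t ⁻¹' A) (splice ∅ ⁻¹' B) ∩ splice ∅ ⁻¹' U
  have hchain : ∀ t, wprob W (E ∅) ≤ wprob W (E t) := by
    intro t
    induction t using Finset.induction_on with
    | empty => exact le_rfl
    | insert a t ha ih =>
      have hEa : E (insert a t) = disjOcc (copyCoord a ⁻¹' (splice t ⁻¹' A)) (splice ∅ ⁻¹' B) ∩
          splice ∅ ⁻¹' U := by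
        simp only [E, splice_insert ha, Set.preimage_comp]
      rw [hEa]
      exact ih.trans <| wprob_disjOcc_inter_le_copyCoord hw (hPA a)
        (hA.preimage (monotone_splice t)) (hB.preimage (monotone_splice ∅))
        (hU.preimage (monotone_splice ∅)) (dependsOn_preimage_splice ha A)
        (dependsOn_preimage_splice (notMem_empty a) B)
        (dependsOn_preimage_splice (notMem_empty a) U)
  calc wprob (piWeight w) (disjOcc A B ∩ U)
      = wprob W (splice univ ⁻¹' Set.univ ∩ splice ∅ ⁻¹' (disjOcc A B ∩ U)) := by
        rw [wprob_splice_univ_inter_splice_empty, (IsProbWeight.pi hw).wprob_univ, one_mul]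
    _ ≤ wprob W (E ∅) := wprob_mono hW fun ω ⟨_, hAB, hUω⟩ =>
        ⟨disjOcc_preimage_splice_empty_subset A B hAB, hUω⟩
    _ ≤ wprob W (E univ) := hchain univ
    _ ≤ wprob W (splice univ ⁻¹' A ∩ splice ∅ ⁻¹' (B ∩ U)) := wprob_mono hW
        fun ω ⟨⟨_, _, _, hS, hT⟩, hUω⟩ => ⟨hS.mem, hT.mem, hUω⟩
    _ = wprob (piWeight w) A * wprob (piWeight w) (B ∩ U) :=
        wprob_splice_univ_inter_splice_empty w A (B ∩ U)

end BK

section AtLeast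

variable {n : ℕ} {Ω : Fin n → Type*} {ι : Type*} {A : ι → Set (∀ i, Ω i)}

lemma OccurDisjointly.mono {I I' : Finset ι} {ω : ∀ i, Ω i} (h : OccurDisjointly A I ω)
    (hI : I' ⊆ I) : OccurDisjointly A I' ω := by
  obtain ⟨S, hdisj, hS⟩ := h
  exact ⟨S, fun j hj j' hj' => hdisj j (hI hj) j' (hI hj'), fun j hj => hS j (hI hj)⟩

def disjOccAtLeast (A : ι → Set (∀ i, Ω i)) (J : Finset ι) (m : ℕ) : Set (∀ i, Ω i) :=
  {ω | ∃ I ⊆ J, #I = m ∧ OccurDisjointly A I ω}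

lemma disjOccAtLeast_zero (J : Finset ι) : disjOccAtLeast A J 0 = Set.univ :=
  Set.eq_univ_of_forall fun _ => ⟨∅, empty_subset J, card_empty, fun _ => ∅, by simp, by simp⟩

lemma disjOccAtLeast_empty_succ (m : ℕ) : disjOccAtLeast A ∅ (m + 1) = ∅ :=
  Set.eq_empty_of_forall_notMem fun _ ⟨I, hI, hcard, _⟩ => by simp [subset_empty.1 hI] at hcard

lemma disjOccAtLeast_succ_subset (J : Finset ι) (m : ℕ) :
    disjOccAtLeast A J (m + 1) ⊆ disjOccAtLeast A J m := by
  rintro ω ⟨I, hIJ, hcard, hocc⟩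
  obtain ⟨I', hI', hcard'⟩ := exists_subset_card_eq (show m ≤ #I by omega)
  exact ⟨I', hI'.trans hIJ, hcard', OccurDisjointly.mono hocc hI'⟩

lemma isLowerSet_disjOccAtLeast [∀ i, Preorder (Ω i)] (hA : ∀ j, IsLowerSet (A j))
    (J : Finset ι) (m : ℕ) : IsLowerSet (disjOccAtLeast A J m) := by
  rintro ω ω' hle ⟨I, hIJ, hcard, S, hdisj, hS⟩
  exact ⟨I, hIJ, hcard, S, hdisj, fun j hj => IsWitness.of_le (hA j) (hS j hj) hle⟩

/-- `a` is among the `m + 1` events, and the union of the witnesses of the other `m` is a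
witness of `disjOccAtLeast A J m` disjoint from that of `A a`. -/
lemma disjOccAtLeast_insert_succ_sdiff_subset [DecidableEq ι] (a : ι) (J : Finset ι) (m : ℕ) :
    disjOccAtLeast A (insert a J) (m + 1) \ disjOccAtLeast A J (m + 1) ⊆
      disjOcc (A a) (disjOccAtLeast A J m) := by
  rintro ω ⟨⟨I, hIJ, hcard, S, hdisj, hS⟩, hnot⟩
  have hIJ' : ∀ j ∈ I.erase a, j ∈ J := fun j hj =>
    (mem_insert.1 (hIJ (mem_of_mem_erase hj))).resolve_left (ne_of_mem_erase hj)
  have haI : a ∈ I := by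
    by_contra haI
    exact hnot ⟨I, fun j hj => hIJ' j (mem_erase.2 ⟨by rintro rfl; exact haI hj, hj⟩), hcard, S,
      hdisj, hS⟩
  refine ⟨S a, (I.erase a).biUnion S, disjoint_biUnion_right _ _ _ |>.2 fun j hj =>
    hdisj a haI j (mem_of_mem_erase hj) (ne_of_mem_erase hj).symm, hS a haI, fun ω' hω' => ?_⟩
  refine ⟨I.erase a, hIJ', by rw [card_erase_of_mem haI, hcard, Nat.add_sub_cancel], S,
    fun j hj j' hj' => hdisj j (mem_of_mem_erase hj) j' (mem_of_mem_erase hj'), fun j hj => ?_⟩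
  exact IsWitness.congr (hS j (mem_of_mem_erase hj)) fun i hi => hω' i (mem_biUnion.2 ⟨j, hj, hi⟩)

lemma mem_disjOccAtLeast_univ_iff {k : ℕ} {A : Fin k → Set (∀ i, Ω i)} {ω : ∀ i, Ω i} {m : ℕ} :
    ω ∈ disjOccAtLeast A univ m ↔ m ≤ maxDisjOcc A ω := by
  let M := {m | ∃ I : Finset (Fin k), #I = m ∧ OccurDisjointly A I ω}
  have hne : M.Nonempty := ⟨0, ∅, card_empty, fun _ => ∅, by simp, by simp⟩
  have hbdd : BddAbove M := ⟨k, by rintro _ ⟨I, rfl, -⟩; simpa using card_le_univ I⟩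
  constructor
  · rintro ⟨I, -, rfl, hI⟩
    exact le_csSup hbdd ⟨I, rfl, hI⟩
  · intro hm
    obtain ⟨I, hcard, hI⟩ := Nat.sSup_mem hne hbdd
    rw [maxDisjOcc, ← hcard] at hm
    obtain ⟨I', hI', hcard'⟩ := exists_subset_card_eq hm
    exact ⟨I', subset_univ _, hcard', OccurDisjointly.mono hI hI'⟩

variable [∀ i, Fintype (Ω i)] [∀ i, Preorder (Ω i)] {w : ∀ i, Ω i → ℝ}

lemma wprob_disjOccAtLeast_insert_succ_le [DecidableEq ι] (hw : ∀ i, IsProbWeight (w i))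
    (hPA : ∀ i, IsPAWeight (w i)) (hA : ∀ j, IsLowerSet (A j)) (a : ι) (J : Finset ι) (m : ℕ) :
    wprob (piWeight w) (disjOccAtLeast A (insert a J) (m + 1)) ≤
      (1 - wprob (piWeight w) (A a)) * wprob (piWeight w) (disjOccAtLeast A J (m + 1)) +
        wprob (piWeight w) (A a) * wprob (piWeight w) (disjOccAtLeast A J m) := by
  set P := wprob (piWeight w)
  set D := disjOccAtLeast A J
  have hBK : P (disjOcc (A a) (D m) ∩ (D (m + 1))ᶜ) ≤ P (A a) * P (D m ∩ (D (m + 1))ᶜ) :=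
    wprob_disjOcc_inter_le hw hPA (hA a) (isLowerSet_disjOccAtLeast hA J m)
      (isLowerSet_disjOccAtLeast hA J (m + 1)).compl
  have hdiff : P (D m ∩ (D (m + 1))ᶜ) = P (D m) - P (D (m + 1)) := by
    have h := wprob_inter_add_diff (v := piWeight w) (D m) (D (m + 1))
    rw [Set.inter_eq_right.2 (disjOccAtLeast_succ_subset J m), Set.sdiff_eq] at h
    linarith
  have hcover : P (disjOccAtLeast A (insert a J) (m + 1)) ≤
      P (D (m + 1)) + P (disjOcc (A a) (D m) ∩ (D (m + 1))ᶜ) := by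
    rw [← wprob_union (disjoint_compl_right.mono_right Set.inter_subset_right)]
    refine wprob_mono (IsProbWeight.pi hw).nonneg fun ω hω => ?_
    by_cases h : ω ∈ D (m + 1)
    · exact Or.inl h
    · exact Or.inr ⟨disjOccAtLeast_insert_succ_sdiff_subset a J m ⟨hω, h⟩, h⟩
  rw [hdiff] at hBK
  linarith

end AtLeast

section Bernoulli

variable {Θ : Type*} [MeasurableSpace Θ] {ν : Measure Θ} [IsProbabilityMeasure ν] {ι : Type*}
  [DecidableEq ι] {Y : ι → Θ → ℕ}

lemma measureReal_succ_le_sum_insert (hmeas : ∀ i, Measurable (Y i)) (hindep : iIndepFun Y ν)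
    (hY : ∀ i θ, Y i θ ≤ 1) {a : ι} {J : Finset ι} (ha : a ∉ J) (m : ℕ) :
    ν.real {θ | m + 1 ≤ ∑ i ∈ insert a J, Y i θ} =
      (1 - ν.real {θ | Y a θ = 1}) * ν.real {θ | m + 1 ≤ ∑ i ∈ J, Y i θ} +
        ν.real {θ | Y a θ = 1} * ν.real {θ | m ≤ ∑ i ∈ J, Y i θ} := by
  let Z : Θ → ℕ := fun θ => ∑ i ∈ J, Y i θ
  have hind : IndepFun (Y a) Z ν := by
    simpa [Z, sum_fn] using (hindep.indepFun_finsetSum_of_notMem hmeas ha).symm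
  have hmul : ∀ s t : Set ℕ, ν.real (Y a ⁻¹' s ∩ Z ⁻¹' t) = ν.real (Y a ⁻¹' s) * ν.real (Z ⁻¹' t) :=
    fun s t => by
      simp only [measureReal_def, hind.measure_inter_preimage_eq_mul s t .of_discrete .of_discrete,
        ENNReal.toReal_mul]
  have hsplit : {θ | m + 1 ≤ ∑ i ∈ insert a J, Y i θ} =
      Y a ⁻¹' {1} ∩ Z ⁻¹' Set.Ici m ∪ (Y a ⁻¹' {1})ᶜ ∩ Z ⁻¹' Set.Ici (m + 1) := by
    ext θ
    have := hY a θ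
    simp only [sum_insert ha, Set.mem_ofPred_eq, Set.mem_union, Set.mem_inter_iff,
      Set.mem_preimage, Set.mem_singleton_iff, Set.mem_Ici, Set.mem_compl_iff, Z]
    omega
  have hmeasA : MeasurableSet (Y a ⁻¹' {1}) := hmeas a .of_discrete
  have hmeasZ : Measurable Z := Finset.measurable_sum J fun i _ => hmeas i
  rw [hsplit, measureReal_union
    (disjoint_compl_right.mono Set.inter_subset_left Set.inter_subset_left)
    (hmeasA.compl.inter (hmeasZ .of_discrete)), hmul, ← Set.preimage_compl, hmul,
    Set.preimage_compl, probReal_compl_eq_one_sub hmeasA]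
  exact add_comm _ _

end Bernoulli

theorem wprob_disjOccAtLeast_le {n : ℕ} {Ω : Fin n → Type*} [∀ i, Fintype (Ω i)]
    [∀ i, Preorder (Ω i)] {w : ∀ i, Ω i → ℝ} (hw : ∀ i, IsProbWeight (w i))
    (hPA : ∀ i, IsPAWeight (w i)) {ι : Type*} [DecidableEq ι] {A : ι → Set (∀ i, Ω i)}
    (hA : ∀ j, IsLowerSet (A j)) {Θ : Type*} [MeasurableSpace Θ] {ν : Measure Θ}
    [IsProbabilityMeasure ν] {Y : ι → Θ → ℕ} (hmeas : ∀ i, Measurable (Y i))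
    (hindep : iIndepFun Y ν) (hY : ∀ i θ, Y i θ ≤ 1)
    (hmean : ∀ j, ν.real {θ | Y j θ = 1} = wprob (piWeight w) (A j)) (J : Finset ι) (m : ℕ) :
    wprob (piWeight w) (disjOccAtLeast A J m) ≤ ν.real {θ | m ≤ ∑ i ∈ J, Y i θ} := by
  have hπ := IsProbWeight.pi hw
  have hzero (J : Finset ι) :
      wprob (piWeight w) (disjOccAtLeast A J 0) ≤ ν.real {θ | 0 ≤ ∑ i ∈ J, Y i θ} := by
    simp [disjOccAtLeast_zero, hπ.wprob_univ]
  induction J using Finset.induction_on generalizing m with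
  | empty =>
    rcases m with _ | m
    · exact hzero ∅
    · simp [disjOccAtLeast_empty_succ, wprob]
  | insert a J ha ih =>
    rcases m with _ | m
    · exact hzero _
    have hp : 0 ≤ wprob (piWeight w) (A a) := wprob_nonneg hπ.nonneg (A a)
    have hq : 0 ≤ 1 - wprob (piWeight w) (A a) := sub_nonneg.2 (hπ.wprob_le_one (A a))
    calc _ ≤ _ := wprob_disjOccAtLeast_insert_succ_le hw hPA hA a J m
      _ ≤ (1 - wprob (piWeight w) (A a)) * ν.real {θ | m + 1 ≤ ∑ i ∈ J, Y i θ} +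
          wprob (piWeight w) (A a) * ν.real {θ | m ≤ ∑ i ∈ J, Y i θ} := by
        gcongr <;> exact ih _
      _ = _ := by rw [measureReal_succ_le_sum_insert hmeas hindep hY ha, hmean]

section Measure

variable {γ : Type*} [Fintype γ] [MeasurableSpace γ] [MeasurableSingletonClass γ]

lemma measureReal_eq_wprob (μ : Measure γ) [IsFiniteMeasure μ] (P : Set γ) :
    μ.real P = wprob (fun x => μ.real {x}) P := by
  classical
  rw [wprob, ← Set.coe_toFinset P, sum_indicator_subset _ (subset_univ _),
    sum_measureReal_singleton]

lemma isProbWeight_measureReal_singleton (μ : Measure γ) [IsProbabilityMeasure μ] :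
    IsProbWeight fun x => μ.real {x} where
  nonneg _ := measureReal_nonneg
  sum_eq_one := by rw [← wprob_univ, ← measureReal_eq_wprob, probReal_univ]

lemma PositivelyAssociated.isPAWeight [Preorder γ] {μ : Measure γ} [IsFiniteMeasure μ]
    (h : PositivelyAssociated μ) : IsPAWeight fun x => μ.real {x} := by
  intro P Q hP hQ
  simp only [← measureReal_eq_wprob]
  simpa only [measureReal_def, ENNReal.toReal_mul] using
    ENNReal.toReal_mono (measure_ne_top _ _) (h P Q hP hQ)

lemma measureReal_pi_eq_wprob {ι : Type*} [Fintype ι] [DecidableEq ι] {Ω : ι → Type*}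
    [∀ i, Fintype (Ω i)] [∀ i, MeasurableSpace (Ω i)] [∀ i, MeasurableSingletonClass (Ω i)]
    (μ : ∀ i, Measure (Ω i)) [∀ i, IsFiniteMeasure (μ i)] (X : Set (∀ i, Ω i)) :
    (Measure.pi μ).real X = wprob (piWeight fun i x => (μ i).real {x}) X := by
  rw [measureReal_eq_wprob]
  congr 1
  funext ω
  simp [measureReal_def, piWeight, ENNReal.toReal_prod]

end Measure

end ExtendedBK

open ExtendedBK

/-- **Extended BK inequality (decreasing events), stochastic domination form.**
In a finite product probability space with positively associated factors, if
`A 1, …, A k` are decreasing events and `X` is the maximal number of them occurring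
disjointly, then `X` is stochastically dominated by a sum `Y` of independent
Bernoulli random variables `Y i` with means `μ (A i)`. -/
theorem extended_BK_decreasing
    {n k : ℕ} {Ω : Fin n → Type*}
    [∀ i, Fintype (Ω i)] [∀ i, PartialOrder (Ω i)]
    [∀ i, MeasurableSpace (Ω i)] [∀ i, MeasurableSingletonClass (Ω i)]
    (μi : ∀ i, Measure (Ω i)) [∀ i, IsProbabilityMeasure (μi i)]
    (hPA : ∀ i, PositivelyAssociated (μi i))
    (A : Fin k → Set (∀ i, Ω i))
    (hA : ∀ j, IsLowerSet (A j))
    -- an abstract probability space carrying the independent Bernoulli variables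
    {Θ : Type*} [MeasurableSpace Θ] (ν : Measure Θ) [IsProbabilityMeasure ν]
    (Y : Fin k → Θ → ℕ)
    (hYmeas : ∀ i, Measurable (Y i))
    (hYindep : iIndepFun Y ν)
    (hYbernoulli : ∀ i θ, Y i θ ≤ 1)
    (hYmean : ∀ i, ν {θ | Y i θ = 1} = Measure.pi μi (A i)) :
    ∀ r : ℝ,
      Measure.pi μi {ω | r ≤ (maxDisjOcc A ω : ℝ)} ≤
        ν {θ | r ≤ ((∑ i, Y i θ : ℕ) : ℝ)} := by
  intro r
  have hX : {ω | r ≤ (maxDisjOcc A ω : ℝ)} = disjOccAtLeast A univ ⌈r⌉₊ := by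
    ext ω
    simp [mem_disjOccAtLeast_univ_iff, Nat.ceil_le]
  have hY : {θ | r ≤ ((∑ i, Y i θ : ℕ) : ℝ)} = {θ | ⌈r⌉₊ ≤ ∑ i ∈ univ, Y i θ} := by
    ext θ
    simp [Nat.ceil_le]
  rw [hX, hY, ← ENNReal.toReal_le_toReal (measure_ne_top _ _) (measure_ne_top _ _)]
  refine (measureReal_pi_eq_wprob μi _).trans_le <|
    wprob_disjOccAtLeast_le (fun i => isProbWeight_measureReal_singleton (μi i))
      (fun i => (hPA i).isPAWeight) hA hYmeas hYindep hYbernoulli (fun j => ?_) univ ⌈r⌉₊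
  rw [← measureReal_pi_eq_wprob, measureReal_def, measureReal_def, hYmean]
end

section
/- Let A_1,…,A_k be events in a probability space, let λ = Σ_{i=1}^k Pr(A_i), and define Z(ω) = max{|I| : I ⊆ [k], the events {A_i}_{i∈I} are mutually independent, and ω ∈ ∩_{i∈I} A_i}. Then for every t ≥ 0, Pr(Z ≥ λ + t) ≤ exp(−λ φ(t/λ)), where φ(x) = (1+x)log(1+x) − x. -/
open MeasureTheory ProbabilityTheory

/-- The Chernoff rate function `φ(x) = (1+x) log (1+x) − x`. -/
noncomputable def chernoffPhi (x : ℝ) : ℝ := (1 + x) * Real.log (1 + x) - x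

/-- The events `A i`, `i ∈ I`, are mutually independent:
for every `J ⊆ I`, `μ(⋂_{i ∈ J} A i) = ∏_{i ∈ J} μ(A i)`. -/
def MutuallyIndepEvents {Ω ι : Type*} [MeasurableSpace Ω] (μ : Measure Ω)
    (A : ι → Set Ω) (I : Finset ι) : Prop :=
  ∀ J ⊆ I, μ (⋂ i ∈ J, A i) = ∏ i ∈ J, μ (A i)

/-- `Z ω` is the maximum size of a set `I ⊆ [k]` such that the events
`A i`, `i ∈ I`, are mutually independent and all occur at `ω`. -/
noncomputable def maxIndepOcc {Ω : Type*} [MeasurableSpace Ω] (μ : Measure Ω)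
    {k : ℕ} (A : Fin k → Set Ω) (ω : Ω) : ℕ :=
  sSup {m : ℕ | ∃ I : Finset (Fin k), I.card = m ∧
    MutuallyIndepEvents μ A I ∧ ∀ i ∈ I, ω ∈ A i}

/-!
Chernoff's method applied to a polynomial statistic. For `u ≥ 0` let
`W = ∑ u ^ |I| 𝟙[⋂_{i ∈ I} A i]` over the mutually independent families `I`. If `I₀` is an
independent family of size `Z` that occurs, all its subfamilies are independent and occur,
so `W ≥ ∑_{I ⊆ I₀} u ^ |I| = (1 + u) ^ Z`. Independence gives
`E W ≤ ∑_I u ^ |I| ∏_{i ∈ I} Pr(A i) = ∏ (1 + u Pr(A i)) ≤ exp (u λ)`, and Markov's inequality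
with `u = t / λ` yields `Pr(Z ≥ λ + t) ≤ exp (u λ) / (1 + u) ^ (λ + t) = exp (-λ φ(t / λ))`.
-/

open Finset ENNReal

section

variable {Ω ι : Type*} [MeasurableSpace Ω] {μ : Measure Ω} {A : ι → Set Ω}

namespace MutuallyIndepEvents

theorem mono {I J : Finset ι} (hJ : MutuallyIndepEvents μ A J) (hIJ : I ⊆ J) :
    MutuallyIndepEvents μ A I :=
  fun K hK => hJ K (hK.trans hIJ)

theorem empty [IsProbabilityMeasure μ] : MutuallyIndepEvents μ A ∅ := by
  intro J hJ
  simp [subset_empty.mp hJ]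

end MutuallyIndepEvents

theorem exists_card_eq_maxIndepOcc {k : ℕ} (μ : Measure Ω) [IsProbabilityMeasure μ]
    (A : Fin k → Set Ω) (ω : Ω) :
    ∃ I : Finset (Fin k), #I = maxIndepOcc μ A ω ∧
      MutuallyIndepEvents μ A I ∧ ∀ i ∈ I, ω ∈ A i := by
  apply Nat.sSup_mem (s := {m | ∃ I : Finset (Fin k), #I = m ∧
    MutuallyIndepEvents μ A I ∧ ∀ i ∈ I, ω ∈ A i})
  · exact ⟨0, ∅, rfl, .empty, by simp⟩
  · refine ⟨k, ?_⟩
    rintro _ ⟨I, rfl, -⟩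
    exact card_le_univ I |>.trans_eq (Fintype.card_fin k)

section indepWeight

variable [Fintype ι]

/-- The `toMeasurable` hull keeps the function measurable when the events `A i` are not. -/
noncomputable def indepWeight (μ : Measure Ω) (A : ι → Set Ω) (w : ℝ≥0∞) (ω : Ω) : ℝ≥0∞ :=
  open scoped Classical in
  ∑ I ∈ univ.filter (MutuallyIndepEvents μ A),
    (toMeasurable μ (⋂ i ∈ I, A i)).indicator (fun _ => w ^ #I) ω

theorem measurable_indepWeight (w : ℝ≥0∞) : Measurable (indepWeight μ A w) :=
  Finset.measurable_sum _ fun _ _ =>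
    measurable_const.indicator (measurableSet_toMeasurable _ _)

theorem add_one_pow_card_le_indepWeight {I : Finset ι} (hI : MutuallyIndepEvents μ A I)
    {ω : Ω} (hω : ∀ i ∈ I, ω ∈ A i) (w : ℝ≥0∞) : (w + 1) ^ #I ≤ indepWeight μ A w ω := by
  classical
  calc (w + 1) ^ #I = ∑ J ∈ I.powerset, w ^ #J := by
        simp [← sum_pow_mul_eq_add_pow]
    _ = ∑ J ∈ I.powerset, (toMeasurable μ (⋂ i ∈ J, A i)).indicator (fun _ => w ^ #J) ω := by
        refine sum_congr rfl fun J hJ => ?_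
        rw [Set.indicator_of_mem <| subset_toMeasurable _ _ <|
          Set.mem_iInter₂.mpr fun i hi => hω i (mem_powerset.mp hJ hi)]
    _ ≤ indepWeight μ A w ω := by
        unfold indepWeight
        refine sum_le_sum_of_subset fun J hJ => mem_filter.mpr ⟨mem_univ J, ?_⟩
        exact hI.mono (mem_powerset.mp hJ)

theorem lintegral_indepWeight_le (w : ℝ≥0∞) :
    ∫⁻ ω, indepWeight μ A w ω ∂μ ≤ ∏ i, (w * μ (A i) + 1) := by
  classical
  calc ∫⁻ ω, indepWeight μ A w ω ∂μ
      = ∑ I ∈ univ.filter (MutuallyIndepEvents μ A), w ^ #I * ∏ i ∈ I, μ (A i) := by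
        unfold indepWeight
        rw [lintegral_finsetSum _ fun _ _ =>
          measurable_const.indicator (measurableSet_toMeasurable _ _)]
        refine sum_congr (by congr) fun I hI => ?_
        rw [lintegral_indicator_const (measurableSet_toMeasurable _ _), measure_toMeasurable,
          (mem_filter.mp hI).2 I le_rfl]
    _ ≤ ∑ I ∈ (univ : Finset ι).powerset, w ^ #I * ∏ i ∈ I, μ (A i) :=
        sum_le_sum_of_subset fun I _ => mem_powerset.mpr (subset_univ I)
    _ = ∏ i, (w * μ (A i) + 1) := by
        rw [prod_add]
        refine sum_congr rfl fun I _ => ?_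
        rw [prod_mul_distrib, prod_const, prod_const_one, mul_one]

end indepWeight

theorem ENNReal.ofReal_mul_add_one_le_ofReal_exp {u : ℝ} (hu : 0 ≤ u) {a : ℝ≥0∞} (ha : a ≠ ∞) :
    ENNReal.ofReal u * a + 1 ≤ ENNReal.ofReal (Real.exp (u * a.toReal)) := by
  calc ENNReal.ofReal u * a + 1 = ENNReal.ofReal (u * a.toReal + 1) := by
        rw [ENNReal.ofReal_add (by positivity) zero_le_one, ENNReal.ofReal_mul hu,
          ofReal_toReal ha, ofReal_one]
    _ ≤ _ := ENNReal.ofReal_le_ofReal (Real.add_one_le_exp _)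

theorem measure_le_maxIndepOcc_le {k : ℕ} [IsProbabilityMeasure μ] (A : Fin k → Set Ω) {u : ℝ}
    (hu : 0 ≤ u) (s : ℝ) :
    μ {ω | s ≤ (maxIndepOcc μ A ω : ℝ)} ≤
      ENNReal.ofReal (Real.exp (u * ∑ i, (μ (A i)).toReal) / (1 + u) ^ s) := by
  have hc : 0 < (1 + u) ^ s := Real.rpow_pos_of_pos (by linarith) s
  have h_tail : {ω | s ≤ (maxIndepOcc μ A ω : ℝ)} ⊆
      {ω | ENNReal.ofReal ((1 + u) ^ s) ≤ indepWeight μ A (ENNReal.ofReal u) ω} := by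
    intro ω hω
    obtain ⟨I, hcard, hI, hocc⟩ := exists_card_eq_maxIndepOcc μ A ω
    calc ENNReal.ofReal ((1 + u) ^ s) ≤ ENNReal.ofReal ((1 + u) ^ #I) := by
          rw [← Real.rpow_natCast, hcard]
          exact ENNReal.ofReal_le_ofReal <|
            Real.rpow_le_rpow_of_exponent_le (by linarith) hω
      _ = (ENNReal.ofReal u + 1) ^ #I := by
          rw [ENNReal.ofReal_pow (by linarith), add_comm, ENNReal.ofReal_add hu zero_le_one,
            ofReal_one]
      _ ≤ indepWeight μ A (ENNReal.ofReal u) ω := add_one_pow_card_le_indepWeight hI hocc _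
  calc μ {ω | s ≤ (maxIndepOcc μ A ω : ℝ)}
      ≤ (∫⁻ ω, indepWeight μ A (ENNReal.ofReal u) ω ∂μ) / ENNReal.ofReal ((1 + u) ^ s) :=
        (measure_mono h_tail).trans <| meas_ge_le_lintegral_div
          (measurable_indepWeight _).aemeasurable (ENNReal.ofReal_pos.mpr hc).ne' ofReal_ne_top
    _ ≤ ENNReal.ofReal (Real.exp (u * ∑ i, (μ (A i)).toReal)) / ENNReal.ofReal ((1 + u) ^ s) := by
        gcongr
        refine (lintegral_indepWeight_le _).trans ?_
        rw [Finset.mul_sum, Real.exp_sum, ENNReal.ofReal_prod_of_nonneg fun _ _ => by positivity]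
        exact prod_le_prod' fun i _ =>
          ENNReal.ofReal_mul_add_one_le_ofReal_exp hu (measure_ne_top μ _)
    _ = _ := (ENNReal.ofReal_div_of_pos hc).symm

theorem exp_mul_div_rpow_eq_exp_neg_mul_chernoffPhi {lam t : ℝ} (hlam : 0 ≤ lam)
    (ht : 0 ≤ t) :
    Real.exp (t / lam * lam) / (1 + t / lam) ^ (lam + t) =
      Real.exp (-(lam * chernoffPhi (t / lam))) := by
  rcases hlam.eq_or_lt with rfl | hpos
  · -- `t / 0 = 0`, so both sides are `1`
    simp [chernoffPhi]
  have h1u : 0 < 1 + t / lam := by positivity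
  rw [Real.rpow_def_of_pos h1u, ← Real.exp_sub, chernoffPhi]
  congr 1
  field_simp
  ring

end

/-- **Janson's upper tail lemma.** For events `A 1, …, A k` in a probability space,
with `λ = Σ Pr(A i)` and `Z` the maximal number of mutually independent events among
them that occur, `Pr(Z ≥ λ + t) ≤ exp(−λ φ(t/λ))` for every `t ≥ 0`. -/
theorem janson_upper_tail
    {Ω : Type*} [MeasurableSpace Ω] (μ : Measure Ω) [IsProbabilityMeasure μ]
    {k : ℕ} (A : Fin k → Set Ω)
    (lam : ℝ) (hlam : lam = ∑ i, (μ (A i)).toReal) :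
    ∀ t : ℝ, 0 ≤ t →
      (μ {ω | lam + t ≤ (maxIndepOcc μ A ω : ℝ)}).toReal ≤
        Real.exp (-(lam * chernoffPhi (t / lam))) := by
  intro t ht
  have hlam0 : 0 ≤ lam := hlam ▸ sum_nonneg fun _ _ => toReal_nonneg
  rw [← exp_mul_div_rpow_eq_exp_neg_mul_chernoffPhi hlam0 ht]
  refine ENNReal.toReal_le_of_le_ofReal (by positivity) ?_
  have h_markov := measure_le_maxIndepOcc_le A (div_nonneg ht hlam0) (lam + t) (μ := μ)
  rwa [← hlam] at h_markov
end

section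
/- Let Ω = {0,1}^n be equipped with a product probability measure μ = ∏_{i=1}^n μ_i (each μ_i a probability measure on {0,1}), and let A, B ⊆ Ω be increasing events. Then μ(A □ B) ≤ μ(A) μ(B). -/
/-!
Induction on `n`, conditioning on the first coordinate. Let `p, q` be the probabilities that it is
`1, 0`, and write `X₁, X₀` for the slices of an event `X` at these values; for increasing `X`,
`X₀ ⊆ X₁`. A disjoint witness pair for `A □ B` at `(0, ω)` restricts to one for `A₀ □ B₀` at `ω`,
and at `(1, ω)` to one for `A₁ □ B₁`, and also to one for `A₀ □ B₁` or for `A₁ □ B₀`, according to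
whether the witness of `A` avoids the first coordinate or not (then the witness of `B` does). Since
`A₀ □ B₀ ⊆ (A₀ □ B₁) ∩ (A₁ □ B₀)`, inclusion–exclusion gives
`ν((A □ B)₁) + ν(A₀ □ B₀) ≤ ν(A₀ □ B₁) + ν(A₁ □ B₀)`, and splitting `p = p (p + q)` and
`q = q (p + q)` lets the induction hypotheses bound `p ν((A □ B)₁) + q ν((A □ B)₀)` termwise by
`(p ν A₁ + q ν A₀)(p ν B₁ + q ν B₀)`.
-/

open MeasureTheory

/-- `A □ B`: the set of `ω ∈ {0,1}ⁿ` at which `A` and `B` occur disjointly, i.e.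
there are disjoint `S, T ⊆ [n]` such that every `ω'` agreeing with `ω` on `S`
lies in `A` and every `ω'` agreeing with `ω` on `T` lies in `B`. -/
def boxEvent {n : ℕ} (A B : Set (Fin n → Bool)) : Set (Fin n → Bool) :=
  {ω | ∃ S T : Finset (Fin n), Disjoint S T ∧
    (∀ ω' : Fin n → Bool, (∀ i ∈ S, ω' i = ω i) → ω' ∈ A) ∧
    (∀ ω' : Fin n → Bool, (∀ i ∈ T, ω' i = ω i) → ω' ∈ B)}

theorem mul_add_mul_le_mul_of_add_eq_one {R : Type*} [CommSemiring R] [PartialOrder R]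
    [IsOrderedRing R] {p q u v x a₀ a₁ b₀ b₁ : R} (hp : 0 ≤ p) (hq : 0 ≤ q) (hpq : p + q = 1)
    (hu : u ≤ a₁ * b₁) (hvx : v ≤ x) (hx : x ≤ a₀ * b₀) (hux : u + x ≤ a₀ * b₁ + a₁ * b₀) :
    p * u + q * v ≤ (p * a₁ + q * a₀) * (p * b₁ + q * b₀) :=
  calc p * u + q * v
      ≤ p * u + q * x := by gcongr
    _ = (p + q) * (p * u) + (p + q) * (q * x) := by rw [hpq]; ring
    _ = p * p * u + p * q * (u + x) + q * q * x := by ring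
    _ ≤ p * p * (a₁ * b₁) + p * q * (a₀ * b₁ + a₁ * b₀) + q * q * (a₀ * b₀) := by gcongr
    _ = (p * a₁ + q * a₀) * (p * b₁ + q * b₀) := by ring

theorem measure_inter_le_mul_of_subsingleton {α : Type*} [MeasurableSpace α] [Subsingleton α]
    (μ : Measure α) [IsProbabilityMeasure μ] (A B : Set α) : μ (A ∩ B) ≤ μ A * μ B := by
  rcases (A ∩ B).eq_empty_or_nonempty with h | h
  · simp [h]
  · rw [(h.mono Set.inter_subset_left).eq_univ, (h.mono Set.inter_subset_right).eq_univ]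
    simp

section Slice

variable {α : Type*} {n : ℕ}

def slice (c : α) (X : Set (Fin (n + 1) → α)) : Set (Fin n → α) :=
  {ω | Fin.cons c ω ∈ X}

@[simp]
theorem mem_slice {c : α} {X : Set (Fin (n + 1) → α)} {ω : Fin n → α} :
    ω ∈ slice c X ↔ Fin.cons c ω ∈ X :=
  Iff.rfl

theorem isUpperSet_slice [Preorder α] {X : Set (Fin (n + 1) → α)} (hX : IsUpperSet X) (c : α) :
    IsUpperSet (slice c X) :=
  fun _ _ hle hmem => hX (Fin.cons_le_cons.2 ⟨le_rfl, hle⟩) hmem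

theorem slice_subset_slice_of_isUpperSet [Preorder α] {X : Set (Fin (n + 1) → α)}
    (hX : IsUpperSet X) {c c' : α} (hc : c ≤ c') : slice c X ⊆ slice c' X :=
  fun _ hmem => hX (Fin.cons_le_cons.2 ⟨hc, le_rfl⟩) hmem

theorem measure_pi_eq_sum_slice [Fintype α] [MeasurableSpace α] [MeasurableSingletonClass α]
    (μ : Fin (n + 1) → Measure α) [∀ i, SigmaFinite (μ i)] (X : Set (Fin (n + 1) → α)) :
    Measure.pi μ X = ∑ c, μ 0 {c} * Measure.pi (fun j => μ j.succ) (slice c X) := by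
  have he := (measurePreserving_piFinSuccAbove μ 0).symm
  have hX : MeasurableSet X := X.to_countable.measurableSet
  rw [← he.measure_preimage hX.nullMeasurableSet, Measure.prod_apply (hX.preimage he.measurable),
    lintegral_fintype]
  refine Finset.sum_congr rfl fun c _ => ?_
  rw [mul_comm]
  simp only [Fin.succAbove_zero]
  congr 2
  ext ω
  simp only [MeasurableEquiv.piFinSuccAbove_symm_apply, Fin.insertNthEquiv_zero, Set.mem_preimage,
    mem_slice]
  rfl

def IsWitness {ι β : Type*} (X : Set (ι → β)) (S : Finset ι) (ω : ι → β) : Prop :=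
  ∀ ω' : ι → β, (∀ i ∈ S, ω' i = ω i) → ω' ∈ X

theorem IsWitness.slice {X : Set (Fin (n + 1) → α)} {S : Finset (Fin (n + 1))} {c c' : α}
    {ω : Fin n → α} (h : IsWitness X S (Fin.cons c ω)) (hc : c = c' ∨ 0 ∉ S) :
    IsWitness (slice c' X) (S.preimage Fin.succ (Fin.succ_injective n).injOn) ω := by
  intro ω' hω'
  refine h _ fun i hi => ?_
  induction i using Fin.cases with
  | zero =>
    rcases hc with rfl | h0
    · rfl
    · exact absurd hi h0
  | succ j => simpa using hω' j (by simpa using hi)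

end Slice

section BoxEvent

variable {n : ℕ}

theorem boxEvent_subset_inter (A B : Set (Fin n → Bool)) : boxEvent A B ⊆ A ∩ B :=
  fun ω ⟨_, _, _, hA, hB⟩ => ⟨hA ω fun _ _ => rfl, hB ω fun _ _ => rfl⟩

theorem boxEvent_mono {A A' B B' : Set (Fin n → Bool)} (hA : A ⊆ A') (hB : B ⊆ B') :
    boxEvent A B ⊆ boxEvent A' B' :=
  fun _ ⟨S, T, hST, h₁, h₂⟩ => ⟨S, T, hST, fun ω' h => hA (h₁ ω' h), fun ω' h => hB (h₂ ω' h)⟩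

theorem slice_boxEvent_subset (c : Bool) (A B : Set (Fin (n + 1) → Bool)) :
    slice c (boxEvent A B) ⊆ boxEvent (slice c A) (slice c B) :=
  fun _ ⟨_, _, hST, hA, hB⟩ =>
    ⟨_, _, Finset.disjoint_preimage hST, IsWitness.slice hA (.inl rfl),
      IsWitness.slice hB (.inl rfl)⟩

theorem slice_true_boxEvent_subset (A B : Set (Fin (n + 1) → Bool)) :
    slice true (boxEvent A B) ⊆
      boxEvent (slice false A) (slice true B) ∪ boxEvent (slice true A) (slice false B) := by
  rintro ω ⟨S, T, hST, hA, hB⟩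
  by_cases h0 : 0 ∈ S
  · exact .inr ⟨_, _, Finset.disjoint_preimage hST, IsWitness.slice hA (.inl rfl),
      IsWitness.slice hB (.inr (Finset.disjoint_left.1 hST h0))⟩
  · exact .inl ⟨_, _, Finset.disjoint_preimage hST, IsWitness.slice hA (.inr h0),
      IsWitness.slice hB (.inl rfl)⟩

theorem measure_slice_true_boxEvent_add_le (ν : Measure (Fin n → Bool))
    {A B : Set (Fin (n + 1) → Bool)} (hA : IsUpperSet A) (hB : IsUpperSet B) :
    ν (slice true (boxEvent A B)) + ν (boxEvent (slice false A) (slice false B)) ≤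
      ν (boxEvent (slice false A) (slice true B)) + ν (boxEvent (slice true A) (slice false B)) :=
  calc _ ≤ ν (boxEvent (slice false A) (slice true B) ∪ boxEvent (slice true A) (slice false B)) +
        ν (boxEvent (slice false A) (slice true B) ∩ boxEvent (slice true A) (slice false B)) := by
        gcongr
        · exact slice_true_boxEvent_subset A B
        · exact Set.subset_inter
            (boxEvent_mono subset_rfl (slice_subset_slice_of_isUpperSet hB (Bool.false_le true)))
            (boxEvent_mono (slice_subset_slice_of_isUpperSet hA (Bool.false_le true)) subset_rfl)
    _ = _ := measure_union_add_inter _ (Set.to_countable _).measurableSet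

end BoxEvent

/-- **The van den Berg–Kesten inequality.** For a product probability measure on
`{0,1}ⁿ` and increasing events `A, B`, `μ(A □ B) ≤ μ(A) μ(B)`. -/
theorem van_den_Berg_Kesten
    {n : ℕ} (μi : Fin n → Measure Bool) [∀ i, IsProbabilityMeasure (μi i)]
    (A B : Set (Fin n → Bool)) (hA : IsUpperSet A) (hB : IsUpperSet B) :
    Measure.pi μi (boxEvent A B) ≤ Measure.pi μi A * Measure.pi μi B := by
  induction n with
  | zero =>
    exact (measure_mono (boxEvent_subset_inter A B)).trans
      (measure_inter_le_mul_of_subsingleton _ A B)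
  | succ n ih =>
    set ν := Measure.pi fun j : Fin n => μi j.succ
    have bk (c d : Bool) :
        ν (boxEvent (slice c A) (slice d B)) ≤ ν (slice c A) * ν (slice d B) :=
      ih _ _ _ (isUpperSet_slice hA c) (isUpperSet_slice hB d)
    have hμ₀ : μi 0 {true} + μi 0 {false} = 1 := by
      rw [← Fintype.sum_bool (fun c => μi 0 {c}), sum_measure_singleton, Finset.coe_univ,
        measure_univ]
    simp only [measure_pi_eq_sum_slice, Fintype.sum_bool]
    exact mul_add_mul_le_mul_of_add_eq_one zero_le zero_le hμ₀
      ((measure_mono (slice_boxEvent_subset true A B)).trans (bk true true))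
      (measure_mono (slice_boxEvent_subset false A B)) (bk false false)
      ((measure_slice_true_boxEvent_add_le ν hA hB).trans
        (add_le_add (bk false true) (bk true false)))
end

section
/- For every real λ > 0 and every positive integer t, Σ_{i=0}^{t−1} log(λ/(λ + t − i)) ≤ ∫_0^t log(λ/(λ + t − x)) dx = −λ φ(t/λ); consequently ∏_{i=0}^{t−1} λ/(λ + t − i) ≤ exp(−λ φ(t/λ)), where φ(x) = (1+x)log(1+x) − x. -/
/-!
The integrand `x ↦ log (λ / (λ + t - x))` is increasing on `[0, t]`, so its left Riemann sum
with unit steps is at most its integral. The substitution `u = λ + t - x` turns the integral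
into `∫_λ^{λ+t} (log λ - log u) du`, which evaluates to `-λ φ(t/λ)`. Exponentiating the sum
bound gives the product bound.
-/

open MeasureTheory

open Real

lemma monotoneOn_log_div_sub {c : ℝ} (hc : 0 < c) (a : ℝ) :
    MonotoneOn (fun x => log (c / (a - x))) (Set.Iio a) := by
  intro x hx y hy hxy
  have hx' : 0 < a - x := sub_pos.mpr hx
  have hy' : 0 < a - y := sub_pos.mpr hy
  exact log_le_log (div_pos hc hx') (div_le_div_of_nonneg_left hc.le hy' (by linarith))

lemma mul_chernoffPhi_div {a : ℝ} (ha : a ≠ 0) (t : ℝ) :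
    a * chernoffPhi (t / a) = (a + t) * log ((a + t) / a) - t := by
  have h : 1 + t / a = (a + t) / a := by field_simp
  rw [chernoffPhi, h]
  field_simp

lemma integral_log_div_left {a b : ℝ} (ha : 0 < a) (hb : 0 < b) :
    ∫ u in a..b, log (a / u) = b - a - b * log (b / a) := by
  have hpos : Set.uIcc a b ⊆ Set.Ioi 0 := Set.ordConnected_Ioi.uIcc_subset ha hb
  have hlog_div : ∫ u in a..b, log (a / u) = ∫ u in a..b, (log a - log u) :=
    intervalIntegral.integral_congr fun u hu => log_div ha.ne' (hpos hu).ne'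
  have hint : IntervalIntegrable log volume a b :=
    intervalIntegral.intervalIntegrable_log fun h0 => lt_irrefl (0 : ℝ) (hpos h0)
  rw [hlog_div, intervalIntegral.integral_sub intervalIntegrable_const hint,
    intervalIntegral.integral_const, integral_log, log_div hb.ne' ha.ne', smul_eq_mul]
  ring

lemma integral_log_div_add_sub {lam t : ℝ} (hlam : 0 < lam) (ht : 0 < lam + t) :
    ∫ x in (0:ℝ)..t, log (lam / (lam + t - x)) = -(lam * chernoffPhi (t / lam)) := by
  have hsubst : ∫ x in (0:ℝ)..t, log (lam / (lam + t - x)) = ∫ u in lam..lam + t, log (lam / u) := by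
    simpa using intervalIntegral.integral_comp_sub_left (fun u => log (lam / u)) (lam + t)
      (a := 0) (b := t)
  rw [hsubst, integral_log_div_left hlam ht, mul_chernoffPhi_div hlam.ne']
  ring

theorem log_sum_integral_chernoff_general (lam : ℝ) (hlam : 0 < lam) (t : ℕ) :
    (∑ i ∈ Finset.range t, Real.log (lam / (lam + t - i)) ≤
      ∫ x in (0:ℝ)..(t:ℝ), Real.log (lam / (lam + t - x))) ∧
    (∫ x in (0:ℝ)..(t:ℝ), Real.log (lam / (lam + t - x))) =
      -(lam * chernoffPhi (t / lam)) ∧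
    ∏ i ∈ Finset.range t, lam / (lam + t - i) ≤
      Real.exp (-(lam * chernoffPhi (t / lam))) := by
  have hsum : ∑ i ∈ Finset.range t, log (lam / (lam + t - i)) ≤
      ∫ x in (0:ℝ)..t, log (lam / (lam + t - x)) := by
    have hmono := (monotoneOn_log_div_sub hlam (lam + t)).mono
      (fun x (hx : x ∈ Set.Icc (0:ℝ) (0 + t)) => show x < lam + t by linarith [hx.2])
    simpa using hmono.sum_le_integral
  have hint := integral_log_div_add_sub hlam (t := t) (by positivity)
  have hfactor_pos : ∀ i ∈ Finset.range t, 0 < lam / (lam + t - i) := fun i hi => by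
    have hi : (i : ℝ) < t := by exact_mod_cast Finset.mem_range.mp hi
    exact div_pos hlam (by linarith)
  refine ⟨hsum, hint, ?_⟩
  rw [← log_le_iff_le_exp (Finset.prod_pos hfactor_pos), log_prod fun i hi => (hfactor_pos i hi).ne',
    ← hint]
  exact hsum

/-- **Calculus step in the proof of the Chernoff-type bound.** For `λ > 0` and a
positive integer `t`:
`Σ_{i=0}^{t-1} log(λ/(λ+t−i)) ≤ ∫_0^t log(λ/(λ+t−x)) dx = −λ φ(t/λ)`, and
consequently `∏_{i=0}^{t-1} λ/(λ+t−i) ≤ exp(−λ φ(t/λ))`. -/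
theorem log_sum_integral_chernoff (lam : ℝ) (hlam : 0 < lam) (t : ℕ) (ht : 0 < t) :
    (∑ i ∈ Finset.range t, Real.log (lam / (lam + t - i)) ≤
      ∫ x in (0:ℝ)..(t:ℝ), Real.log (lam / (lam + t - x))) ∧
    (∫ x in (0:ℝ)..(t:ℝ), Real.log (lam / (lam + t - x))) =
      -(lam * chernoffPhi (t / lam)) ∧
    ∏ i ∈ Finset.range t, lam / (lam + t - i) ≤
      Real.exp (-(lam * chernoffPhi (t / lam))) :=
  log_sum_integral_chernoff_general lam hlam t
end
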